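/- arXiv:2302.04610 — 8 statements merged into one kernel-verified Lean document; each statement's English description precedes it below -/
import Mathlib

section
/- Let (X,d_X) and (Y,d_Y) be complete separable metric spaces. Let μ_c, μ_a be Borel probability measures on X and ν_c, ν_a be Borel probability measures on Y, let ε_1, ε_2 ∈ [0,1], and set μ = (1−ε_1)μ_c + ε_1 μ_a and ν = (1−ε_2)ν_c + ε_2 ν_a. Assume KL(μ_a,μ_c) and KL(ν_a,ν_c) are finite and strictly positive, and KL(μ_c,μ_a) and KL(ν_c,ν_a) are finite. Then for all ρ_1, ρ_2 ≥ 0 and τ_1, τ_2 ≥ 0: GW^rob_{ρ_1,ρ_2}(μ,ν) ≤ GW(μ_c,ν_c) + max(0, ε_1 − ρ_1/KL(μ_a,μ_c))·τ_1·KL(μ_c,μ_a) + max(0, ε_2 − ρ_2/KL(ν_a,ν_c))·τ_2·KL(ν_c,ν_a). -/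
open MeasureTheory ENNReal Classical

/-- Kullback–Leibler divergence between two measures: `∫ log (dρ/dσ) dρ` when `ρ ≪ σ`
and the log-likelihood ratio is integrable, and `∞` otherwise. -/
noncomputable def KLdiv {X : Type*} [MeasurableSpace X] (ρ σ : Measure X) : ℝ≥0∞ :=
  if ρ ≪ σ ∧ Integrable (llr ρ σ) ρ then ENNReal.ofReal (∫ x, llr ρ σ x ∂ρ) else ⊤

/-- Generalized Kullback–Leibler divergence between finite positive measures:
`∫ log (dρ/dσ) dρ - ρ(X) + σ(X)` when `ρ ≪ σ` (and the integral is finite), `∞` otherwise. -/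
noncomputable def GKLdiv {X : Type*} [MeasurableSpace X] (ρ σ : Measure X) : ℝ≥0∞ :=
  if ρ ≪ σ ∧ Integrable (llr ρ σ) ρ then
    ENNReal.ofReal (∫ x, llr ρ σ x ∂ρ - (ρ Set.univ).toReal + (σ Set.univ).toReal) else ⊤

/-- The Gromov–Wasserstein transportation cost of a plan `π`:
`∬ |d_X(x,x') - d_Y(y,y')|² dπ dπ`. -/
noncomputable def GWcost {X Y : Type*} [MetricSpace X] [MetricSpace Y]
    [MeasurableSpace X] [MeasurableSpace Y] (π : Measure (X × Y)) : ℝ≥0∞ :=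
  ∫⁻ p, ∫⁻ q, ENNReal.ofReal (|dist p.1 q.1 - dist p.2 q.2| ^ 2) ∂π ∂π

/-- The Gromov–Wasserstein value: infimum of the cost over couplings of `μ` and `ν`. -/
noncomputable def GW {X Y : Type*} [MetricSpace X] [MetricSpace Y]
    [MeasurableSpace X] [MeasurableSpace Y] (μ : Measure X) (ν : Measure Y) : ℝ≥0∞ :=
  ⨅ (π : Measure (X × Y)) (_ : π.map Prod.fst = μ) (_ : π.map Prod.snd = ν), GWcost π

/-- `F(α,β)`: infimum over finite positive measures `π` on `X × Y` of the GW cost plus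
KL penalties `τ₁ GKL(π₁, α) + τ₂ GKL(π₂, β)` on the marginals. -/
noncomputable def Fobj {X Y : Type*} [MetricSpace X] [MetricSpace Y]
    [MeasurableSpace X] [MeasurableSpace Y] (τ₁ τ₂ : ℝ)
    (α : Measure X) (β : Measure Y) : ℝ≥0∞ :=
  ⨅ (π : Measure (X × Y)) (_ : IsFiniteMeasure π),
    GWcost π + ENNReal.ofReal τ₁ * GKLdiv (π.map Prod.fst) α
      + ENNReal.ofReal τ₂ * GKLdiv (π.map Prod.snd) β

/-- The robust Gromov–Wasserstein value `GW^rob_{ρ₁,ρ₂}(μ,ν)`. -/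
noncomputable def GWrob {X Y : Type*} [MetricSpace X] [MetricSpace Y]
    [MeasurableSpace X] [MeasurableSpace Y] (ρ₁ ρ₂ τ₁ τ₂ : ℝ)
    (μ : Measure X) (ν : Measure Y) : ℝ≥0∞ :=
  ⨅ (α : Measure X) (_ : IsProbabilityMeasure α) (_ : KLdiv μ α ≤ ENNReal.ofReal ρ₁)
    (β : Measure Y) (_ : IsProbabilityMeasure β) (_ : KLdiv ν β ≤ ENNReal.ofReal ρ₂),
    Fobj τ₁ τ₂ α β

/-! The reference measures are the mixtures `α = (1 - s) μc + s μa` with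
`s = max 0 (ε₁ - ρ₁ / KL(μa, μc))`, and likewise `β`. Mathlib's `klDiv` is the generalized KL
divergence; it is positively homogeneous and, by convexity of `x log x + 1 - x`, jointly
subadditive: `KL(ρ₁ + ρ₂, σ₁ + σ₂) ≤ KL(ρ₁, σ₁) + KL(ρ₂, σ₂)`. Writing
`μ = (1 - ε₁) μc + (ε₁ - s) μa + s μa` and `α = (1 - ε₁) μc + (ε₁ - s) μc + s μa` gives
`KL(μ, α) ≤ (ε₁ - s) KL(μa, μc) ≤ ρ₁`, and writing `μc = (1 - s) μc + s μc` gives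
`KL(μc, α) ≤ s KL(μc, μa)`. Any coupling of `μc` and `νc` is admissible in `F(α, β)`, where its
marginal penalties are `τ₁ KL(μc, α)` and `τ₂ KL(νc, β)`. -/

open InformationTheory

section

variable {Z : Type*} [MeasurableSpace Z]

lemma KLdiv_eq_klDiv (ρ σ : Measure Z) [IsProbabilityMeasure ρ] [IsProbabilityMeasure σ] :
    KLdiv ρ σ = klDiv ρ σ := by
  simp [KLdiv, klDiv_def]

lemma GKLdiv_eq_klDiv (ρ σ : Measure Z) : GKLdiv ρ σ = klDiv ρ σ := by
  simp only [GKLdiv, klDiv_def, Measure.real]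
  congr 2
  ring

lemma ofReal_klFun_toReal_add_le {a₁ a₂ b₁ b₂ : ℝ≥0∞} (hb : b₁ + b₂ = 1)
    (h₁ : a₁ * b₁ ≠ ∞) (h₂ : a₂ * b₂ ≠ ∞) :
    ENNReal.ofReal (klFun (a₁ * b₁ + a₂ * b₂).toReal) ≤
      b₁ * ENNReal.ofReal (klFun a₁.toReal) + b₂ * ENNReal.ofReal (klFun a₂.toReal) := by
  have hb₁ : b₁ ≠ ∞ := ne_top_of_le_ne_top one_ne_top (hb ▸ le_self_add)
  have hb₂ : b₂ ≠ ∞ := ne_top_of_le_ne_top one_ne_top (hb ▸ le_add_self)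
  have hsum : b₁.toReal + b₂.toReal = 1 := by rw [← toReal_add hb₁ hb₂, hb, toReal_one]
  have hconv := convexOn_klFun.2 (Set.mem_Ici.2 (toReal_nonneg (a := a₁)))
    (Set.mem_Ici.2 (toReal_nonneg (a := a₂))) toReal_nonneg toReal_nonneg hsum
  have hk₁ := klFun_nonneg (toReal_nonneg (a := a₁))
  have hk₂ := klFun_nonneg (toReal_nonneg (a := a₂))
  rw [toReal_add h₁ h₂, toReal_mul, toReal_mul]
  calc ENNReal.ofReal (klFun (a₁.toReal * b₁.toReal + a₂.toReal * b₂.toReal))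
      ≤ ENNReal.ofReal (b₁.toReal * klFun a₁.toReal + b₂.toReal * klFun a₂.toReal) :=
        ofReal_le_ofReal (by simpa only [smul_eq_mul, mul_comm] using hconv)
    _ = _ := by
        rw [ofReal_add (by positivity) (by positivity), ofReal_mul toReal_nonneg,
          ofReal_mul toReal_nonneg, ofReal_toReal hb₁, ofReal_toReal hb₂]

theorem klDiv_add_add_le (ρ₁ ρ₂ σ₁ σ₂ : Measure Z) [IsFiniteMeasure ρ₁] [IsFiniteMeasure ρ₂]
    [IsFiniteMeasure σ₁] [IsFiniteMeasure σ₂] :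
    klDiv (ρ₁ + ρ₂) (σ₁ + σ₂) ≤ klDiv ρ₁ σ₁ + klDiv ρ₂ σ₂ := by
  by_cases h₁ : ρ₁ ≪ σ₁; swap; · simp [klDiv_of_not_ac h₁]
  by_cases h₂ : ρ₂ ≪ σ₂; swap; · simp [klDiv_of_not_ac h₂]
  -- With `ν = σ₁ + σ₂` the densities `dσᵢ/dν` sum to one and `dρᵢ/dν = dρᵢ/dσᵢ · dσᵢ/dν`,
  -- so the integrand is bounded pointwise by convexity of `klFun`.
  set ν := σ₁ + σ₂
  have hσ₁ : σ₁ ≪ ν := Measure.AbsolutelyContinuous.rfl.add_right σ₂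
  have hσ₂ : σ₂ ≪ ν := Measure.AbsolutelyContinuous.rfl.add_right' σ₁
  rw [klDiv_eq_lintegral_klFun_of_ac ((h₁.trans hσ₁).add_left (h₂.trans hσ₂)),
    klDiv_eq_lintegral_klFun_of_ac h₁, klDiv_eq_lintegral_klFun_of_ac h₂,
    ← lintegral_rnDeriv_mul hσ₁ (by fun_prop), ← lintegral_rnDeriv_mul hσ₂ (by fun_prop),
    ← lintegral_add_left (by fun_prop)]
  refine lintegral_mono_ae ?_
  filter_upwards [Measure.rnDeriv_add ρ₁ ρ₂ ν, Measure.rnDeriv_add σ₁ σ₂ ν,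
    Measure.rnDeriv_self ν, Measure.rnDeriv_mul_rnDeriv (κ := ν) h₁,
    Measure.rnDeriv_mul_rnDeriv (κ := ν) h₂, Measure.rnDeriv_lt_top ρ₁ ν,
    Measure.rnDeriv_lt_top ρ₂ ν] with x hρ hσ hν hc₁ hc₂ ht₁ ht₂
  have hb : σ₁.rnDeriv ν x + σ₂.rnDeriv ν x = 1 := by rw [← Pi.add_apply, ← hσ, hν]
  rw [Pi.mul_apply] at hc₁ hc₂
  rw [hρ, Pi.add_apply, ← hc₁, ← hc₂]
  exact ofReal_klFun_toReal_add_le hb (hc₁ ▸ ht₁.ne) (hc₂ ▸ ht₂.ne)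

instance isFiniteMeasure_ofReal_smul (r : ℝ) (σ : Measure Z) [IsFiniteMeasure σ] :
    IsFiniteMeasure (ENNReal.ofReal r • σ) :=
  inferInstanceAs (IsFiniteMeasure (r.toNNReal • σ))

lemma klDiv_ofReal_smul_same (r : ℝ) (ρ σ : Measure Z) [IsFiniteMeasure ρ] [IsFiniteMeasure σ] :
    klDiv (ENNReal.ofReal r • ρ) (ENNReal.ofReal r • σ) = ENNReal.ofReal r * klDiv ρ σ :=
  klDiv_smul_same r.toNNReal

lemma isProbabilityMeasure_mix {s : ℝ} (hs₀ : 0 ≤ s) (hs₁ : s ≤ 1)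
    (σ₀ σ₁ : Measure Z) [IsProbabilityMeasure σ₀] [IsProbabilityMeasure σ₁] :
    IsProbabilityMeasure (ENNReal.ofReal (1 - s) • σ₀ + ENNReal.ofReal s • σ₁) := by
  constructor
  simp [← ofReal_add (sub_nonneg.2 hs₁) hs₀]

lemma ofReal_smul_eq_add_smul {a b : ℝ} (ha : 0 ≤ a) (hb : 0 ≤ b) (σ : Measure Z) :
    ENNReal.ofReal (a + b) • σ = ENNReal.ofReal a • σ + ENNReal.ofReal b • σ := by
  rw [ofReal_add ha hb, add_smul]

theorem klDiv_mix_mix_le {s ε : ℝ} (hs : 0 ≤ s) (hsε : s ≤ ε) (hε : ε ≤ 1)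
    (σ₀ σ₁ : Measure Z) [IsFiniteMeasure σ₀] [IsFiniteMeasure σ₁] :
    klDiv (ENNReal.ofReal (1 - ε) • σ₀ + ENNReal.ofReal ε • σ₁)
        (ENNReal.ofReal (1 - s) • σ₀ + ENNReal.ofReal s • σ₁) ≤
      ENNReal.ofReal (ε - s) * klDiv σ₁ σ₀ := by
  have hε₁ : ENNReal.ofReal ε • σ₁ = ENNReal.ofReal (ε - s) • σ₁ + ENNReal.ofReal s • σ₁ := by
    rw [← ofReal_smul_eq_add_smul (sub_nonneg.2 hsε) hs, sub_add_cancel]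
  have hs₀ : ENNReal.ofReal (1 - s) • σ₀ =
      ENNReal.ofReal (1 - ε) • σ₀ + ENNReal.ofReal (ε - s) • σ₀ := by
    rw [← ofReal_smul_eq_add_smul (sub_nonneg.2 hε) (sub_nonneg.2 hsε), sub_add_sub_cancel]
  rw [hε₁, hs₀, add_assoc (ENNReal.ofReal (1 - ε) • σ₀)]
  calc _ ≤ klDiv (ENNReal.ofReal (1 - ε) • σ₀) (ENNReal.ofReal (1 - ε) • σ₀) +
        (klDiv (ENNReal.ofReal (ε - s) • σ₁) (ENNReal.ofReal (ε - s) • σ₀) +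
          klDiv (ENNReal.ofReal s • σ₁) (ENNReal.ofReal s • σ₁)) :=
        (klDiv_add_add_le _ _ _ _).trans (add_le_add_right (klDiv_add_add_le _ _ _ _) _)
    _ = _ := by simp only [klDiv_ofReal_smul_same, klDiv_self, zero_add, add_zero]

theorem klDiv_left_mix_le {s : ℝ} (hs₀ : 0 ≤ s) (hs₁ : s ≤ 1)
    (σ₀ σ₁ : Measure Z) [IsFiniteMeasure σ₀] [IsFiniteMeasure σ₁] :
    klDiv σ₀ (ENNReal.ofReal (1 - s) • σ₀ + ENNReal.ofReal s • σ₁) ≤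
      ENNReal.ofReal s * klDiv σ₀ σ₁ := by
  have hσ₀ : σ₀ = ENNReal.ofReal (1 - s) • σ₀ + ENNReal.ofReal s • σ₀ := by
    rw [← ofReal_smul_eq_add_smul (sub_nonneg.2 hs₁) hs₀, sub_add_cancel, ofReal_one, one_smul]
  nth_rw 1 [hσ₀]
  calc _ ≤ klDiv (ENNReal.ofReal (1 - s) • σ₀) (ENNReal.ofReal (1 - s) • σ₀) +
        klDiv (ENNReal.ofReal s • σ₀) (ENNReal.ofReal s • σ₁) := klDiv_add_add_le _ _ _ _
    _ = _ := by simp only [klDiv_ofReal_smul_same, klDiv_self, zero_add]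

lemma ofReal_sub_max_mul_le {ε ρ : ℝ} (hε : 0 ≤ ε) (hρ : 0 ≤ ρ) (K : ℝ≥0∞) :
    ENNReal.ofReal (ε - max 0 (ε - ρ / K.toReal)) * K ≤ ENNReal.ofReal ρ := by
  -- When `K.toReal = 0` (i.e. `K = 0` or `K = ∞`) the division is junk, `ρ / 0 = 0`,
  -- and the left factor vanishes.
  rcases eq_or_ne K ∞ with rfl | hK
  · simp [hε]
  set k := K.toReal with hk
  have hsub : 0 ≤ ε - max 0 (ε - ρ / k) := sub_nonneg.2 (max_le hε (sub_le_self _ (by positivity)))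
  rw [← ofReal_toReal hK, ← ofReal_mul hsub, ← hk]
  refine ofReal_le_ofReal ?_
  rcases (show 0 ≤ k from toReal_nonneg).eq_or_lt with hk₀ | hk₀
  · rw [← hk₀, mul_zero]
    exact hρ
  calc (ε - max 0 (ε - ρ / k)) * k ≤ ρ / k * k := by
        gcongr; linarith [le_max_right 0 (ε - ρ / k)]
    _ = ρ := div_mul_cancel₀ ρ hk₀.ne'

theorem exists_klDiv_mix_le (σc σa : Measure Z) [IsProbabilityMeasure σc]
    [IsProbabilityMeasure σa] {ε ρ : ℝ} (hε₀ : 0 ≤ ε) (hε₁ : ε ≤ 1) (hρ : 0 ≤ ρ) :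
    ∃ α : Measure Z, IsProbabilityMeasure α ∧
      klDiv (ENNReal.ofReal (1 - ε) • σc + ENNReal.ofReal ε • σa) α ≤ ENNReal.ofReal ρ ∧
      klDiv σc α ≤ ENNReal.ofReal (max 0 (ε - ρ / (klDiv σa σc).toReal)) * klDiv σc σa := by
  set s := max 0 (ε - ρ / (klDiv σa σc).toReal)
  have hs₀ : 0 ≤ s := le_max_left _ _
  have hsε : s ≤ ε := max_le hε₀ (sub_le_self _ (by positivity))
  exact ⟨_, isProbabilityMeasure_mix hs₀ (hsε.trans hε₁) σc σa,
    (klDiv_mix_mix_le hs₀ hsε hε₁ σc σa).trans (ofReal_sub_max_mul_le hε₀ hρ _),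
    klDiv_left_mix_le hs₀ (hsε.trans hε₁) σc σa⟩

end

section
variable {X Y : Type*} [MetricSpace X] [MetricSpace Y] [MeasurableSpace X] [MeasurableSpace Y]

lemma Fobj_le_GW_add (τ₁ τ₂ : ℝ) (α μ : Measure X) (β ν : Measure Y) [IsFiniteMeasure μ] :
    Fobj τ₁ τ₂ α β ≤
      GW μ ν + ENNReal.ofReal τ₁ * klDiv μ α + ENNReal.ofReal τ₂ * klDiv ν β := by
  simp only [GW, ENNReal.iInf_add]
  refine le_iInf₂ fun π hπ₁ ↦ le_iInf fun hπ₂ ↦ ?_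
  have : IsFiniteMeasure (π.map Prod.fst) := hπ₁ ▸ ‹_›
  have : IsFiniteMeasure π := Measure.isFiniteMeasure_of_map measurable_fst.aemeasurable
  refine (iInf₂_le π this).trans_eq ?_
  rw [GKLdiv_eq_klDiv, GKLdiv_eq_klDiv, hπ₁, hπ₂]

lemma GWrob_le_Fobj {ρ₁ ρ₂ : ℝ} (τ₁ τ₂ : ℝ) {μ α : Measure X} {ν β : Measure Y}
    [IsProbabilityMeasure α] [IsProbabilityMeasure β]
    (hα : KLdiv μ α ≤ ENNReal.ofReal ρ₁) (hβ : KLdiv ν β ≤ ENNReal.ofReal ρ₂) :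
    GWrob ρ₁ ρ₂ τ₁ τ₂ μ ν ≤ Fobj τ₁ τ₂ α β :=
  (iInf₂_le α ‹_›).trans <| (iInf_le _ hα).trans <| (iInf₂_le β ‹_›).trans (iInf_le _ hβ)

end

lemma ofReal_mul_le_ofReal_mul_mul {τ s : ℝ} {x L : ℝ≥0∞} (hs : 0 ≤ s) (hL : L ≠ ∞)
    (hx : x ≤ ENNReal.ofReal s * L) :
    ENNReal.ofReal τ * x ≤ ENNReal.ofReal (s * (τ * L.toReal)) := by
  calc ENNReal.ofReal τ * x ≤ ENNReal.ofReal τ * (ENNReal.ofReal s * L) := by gcongr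
    _ = ENNReal.ofReal (τ * (s * L.toReal)) := by
        rw [ofReal_mul' (by positivity), ofReal_mul hs, ofReal_toReal hL]
    _ = ENNReal.ofReal (s * (τ * L.toReal)) := by rw [mul_left_comm]

theorem rgw_upper_bound_general
    {X Y : Type*}
    [MetricSpace X]
    [MeasurableSpace X]
    [MetricSpace Y]
    [MeasurableSpace Y]
    (μc μa : Measure X) (νc νa : Measure Y)
    [IsProbabilityMeasure μc] [IsProbabilityMeasure μa]
    [IsProbabilityMeasure νc] [IsProbabilityMeasure νa]
    (ε₁ ε₂ : ℝ) (hε₁ : ε₁ ∈ Set.Icc (0 : ℝ) 1) (hε₂ : ε₂ ∈ Set.Icc (0 : ℝ) 1)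
    (μ : Measure X) (ν : Measure Y)
    (hμ : μ = ENNReal.ofReal (1 - ε₁) • μc + ENNReal.ofReal ε₁ • μa)
    (hν : ν = ENNReal.ofReal (1 - ε₂) • νc + ENNReal.ofReal ε₂ • νa)
    (hμca_fin : KLdiv μc μa ≠ ⊤) (hνca_fin : KLdiv νc νa ≠ ⊤)
    (ρ₁ ρ₂ τ₁ τ₂ : ℝ) (hρ₁ : 0 ≤ ρ₁) (hρ₂ : 0 ≤ ρ₂) :
    GWrob ρ₁ ρ₂ τ₁ τ₂ μ ν ≤
      GW μc νc
      + ENNReal.ofReal (max 0 (ε₁ - ρ₁ / (KLdiv μa μc).toReal) * (τ₁ * (KLdiv μc μa).toReal))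
      + ENNReal.ofReal (max 0 (ε₂ - ρ₂ / (KLdiv νa νc).toReal) * (τ₂ * (KLdiv νc νa).toReal)) := by
  obtain ⟨α, hα, hμα, hμcα⟩ := exists_klDiv_mix_le μc μa hε₁.1 hε₁.2 hρ₁
  obtain ⟨β, hβ, hνβ, hνcβ⟩ := exists_klDiv_mix_le νc νa hε₂.1 hε₂.2 hρ₂
  have : IsProbabilityMeasure μ := hμ ▸ isProbabilityMeasure_mix hε₁.1 hε₁.2 μc μa
  have : IsProbabilityMeasure ν := hν ▸ isProbabilityMeasure_mix hε₂.1 hε₂.2 νc νa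
  simp only [KLdiv_eq_klDiv] at hμca_fin hνca_fin ⊢
  calc GWrob ρ₁ ρ₂ τ₁ τ₂ μ ν ≤ Fobj τ₁ τ₂ α β :=
        GWrob_le_Fobj τ₁ τ₂ (by rwa [KLdiv_eq_klDiv, hμ]) (by rwa [KLdiv_eq_klDiv, hν])
    _ ≤ GW μc νc + ENNReal.ofReal τ₁ * klDiv μc α + ENNReal.ofReal τ₂ * klDiv νc β :=
        Fobj_le_GW_add τ₁ τ₂ α μc β νc
    _ ≤ _ := by
        gcongr
        · exact ofReal_mul_le_ofReal_mul_mul (le_max_left _ _) hμca_fin hμcα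
        · exact ofReal_mul_le_ofReal_mul_mul (le_max_left _ _) hνca_fin hνcβ

/-- Theorem 1 (robustness guarantee for robust Gromov–Wasserstein under the Huber
`ε`-contamination model). -/
theorem rgw_upper_bound
    {X Y : Type*}
    [MetricSpace X] [CompleteSpace X] [SecondCountableTopology X]
    [MeasurableSpace X] [BorelSpace X]
    [MetricSpace Y] [CompleteSpace Y] [SecondCountableTopology Y]
    [MeasurableSpace Y] [BorelSpace Y]
    (μc μa : Measure X) (νc νa : Measure Y)
    [IsProbabilityMeasure μc] [IsProbabilityMeasure μa]
    [IsProbabilityMeasure νc] [IsProbabilityMeasure νa]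
    (ε₁ ε₂ : ℝ) (hε₁ : ε₁ ∈ Set.Icc (0 : ℝ) 1) (hε₂ : ε₂ ∈ Set.Icc (0 : ℝ) 1)
    (μ : Measure X) (ν : Measure Y)
    (hμ : μ = ENNReal.ofReal (1 - ε₁) • μc + ENNReal.ofReal ε₁ • μa)
    (hν : ν = ENNReal.ofReal (1 - ε₂) • νc + ENNReal.ofReal ε₂ • νa)
    (hμac_fin : KLdiv μa μc ≠ ⊤) (hμac_pos : 0 < KLdiv μa μc)
    (hνac_fin : KLdiv νa νc ≠ ⊤) (hνac_pos : 0 < KLdiv νa νc)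
    (hμca_fin : KLdiv μc μa ≠ ⊤) (hνca_fin : KLdiv νc νa ≠ ⊤)
    (ρ₁ ρ₂ τ₁ τ₂ : ℝ) (hρ₁ : 0 ≤ ρ₁) (hρ₂ : 0 ≤ ρ₂) (hτ₁ : 0 ≤ τ₁) (hτ₂ : 0 ≤ τ₂) :
    GWrob ρ₁ ρ₂ τ₁ τ₂ μ ν ≤
      GW μc νc
      + ENNReal.ofReal (max 0 (ε₁ - ρ₁ / (KLdiv μa μc).toReal) * (τ₁ * (KLdiv μc μa).toReal))
      + ENNReal.ofReal (max 0 (ε₂ - ρ₂ / (KLdiv νa νc).toReal) * (τ₂ * (KLdiv νc νa).toReal)) :=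
  rgw_upper_bound_general μc μa νc νa ε₁ ε₂ hε₁ hε₂ μ ν hμ hν hμca_fin hνca_fin ρ₁ ρ₂ τ₁ τ₂ hρ₁ hρ₂
end

section
/- Let μ_c and μ_a be Borel probability measures on a Polish space X, let ε ∈ (0,1], and set μ = (1−ε)μ_c + ε·μ_a. Assume 0 < KL(μ_a,μ_c) < ∞ and KL(μ_c,μ_a) < ∞. Then for every ρ ≥ 0 there exists a Borel probability measure α on X such that KL(μ,α) ≤ ρ and KL(μ_c,α) ≤ max(0, 1 − ρ/(ε·KL(μ_a,μ_c)))·ε·KL(μ_c,μ_a). In particular, inf{ KL(μ_c,α) : α a Borel probability measure with KL(μ,α) ≤ ρ } ≤ max(0, 1 − ρ/(ε·KL(μ_a,μ_c)))·ε·KL(μ_c,μ_a). -/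
/-!
KL divergence is convex in each argument: pointwise this is the concavity of `log` (second
argument, densities taken with respect to the first measure) and the convexity of `x log x`
(first argument, densities with respect to the second). Take `α = (1 - λ) μc + λ μ`. Convexity in
the second argument gives `KL(μ, α) ≤ (1 - λ) KL(μ, μc)` and `KL(μc, α) ≤ λ KL(μc, μ)`, while
convexity in either argument of `μ = (1 - ε) μc + ε μa` gives `KL(μ, μc) ≤ ε KL(μa, μc)` and
`KL(μc, μ) ≤ ε KL(μc, μa)`. The weight `λ = max 0 (1 - ρ / (ε KL(μa, μc)))` is the smallest one
making `(1 - λ) ε KL(μa, μc) ≤ ρ`.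
-/

open MeasureTheory ENNReal Classical

open Real Set

lemma one_sub_max_zero_one_sub_div_mul_le {ρ c : ℝ} (hρ : 0 ≤ ρ) (hc : 0 ≤ c) :
    (1 - max 0 (1 - ρ / c)) * c ≤ ρ := by
  rcases hc.eq_or_lt with rfl | hc
  · simpa using hρ
  calc (1 - max 0 (1 - ρ / c)) * c ≤ ρ / c * c := by
        gcongr
        linarith [le_max_right 0 (1 - ρ / c)]
    _ = ρ := div_mul_cancel₀ ρ hc.ne'

namespace ENNReal

lemma ofReal_le_mix {z x y t : ℝ} (ht : t ∈ Icc 0 1) (h : z ≤ (1 - t) * x + t * y) :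
    ENNReal.ofReal z ≤
      ENNReal.ofReal (1 - t) * ENNReal.ofReal x + ENNReal.ofReal t * ENNReal.ofReal y := by
  rw [← ofReal_mul (sub_nonneg.2 ht.2), ← ofReal_mul ht.1]
  exact (ofReal_le_ofReal h).trans ofReal_add_le

lemma le_mix_of_ne_top {f : ℝ → ℝ≥0∞} {a b : ℝ≥0∞} {t : ℝ} (ht : t ∈ Icc 0 1)
    (h₀ : f 0 ≤ a) (h₁ : f 1 ≤ b)
    (h : a ≠ ⊤ → b ≠ ⊤ → f t ≤ ENNReal.ofReal (1 - t) * a + ENNReal.ofReal t * b) :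
    f t ≤ ENNReal.ofReal (1 - t) * a + ENNReal.ofReal t * b := by
  rcases ht.1.eq_or_lt with rfl | ht0
  · simpa using h₀
  rcases ht.2.eq_or_lt with rfl | ht1
  · simpa using h₁
  by_cases hab : a ≠ ⊤ ∧ b ≠ ⊤
  · exact h hab.1 hab.2
  have h1t : ENNReal.ofReal (1 - t) ≠ 0 := by simpa using ht1
  have ht' : ENNReal.ofReal t ≠ 0 := by simpa using ht0
  obtain rfl | rfl : a = ⊤ ∨ b = ⊤ := by tauto
  · simp [mul_top h1t]
  · simp [mul_top ht']

lemma ofReal_one_sub_max_zero_one_sub_div_mul_le {ρ ε : ℝ} (hρ : 0 ≤ ρ) (hε : 0 ≤ ε)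
    (k : ℝ≥0∞) :
    ENNReal.ofReal (1 - max 0 (1 - ρ / (ε * k.toReal))) * (ENNReal.ofReal ε * k) ≤
      ENNReal.ofReal ρ := by
  rcases eq_or_ne k ⊤ with rfl | hk
  -- `⊤.toReal = 0` and `ρ / 0 = 0`, so the weight is `ofReal 0 = 0`.
  · simp
  rw [← ofReal_toReal hk, ← ofReal_mul hε, ← ofReal_mul'
    (mul_nonneg hε toReal_nonneg), toReal_ofReal toReal_nonneg]
  exact ofReal_le_ofReal
    (one_sub_max_zero_one_sub_div_mul_le hρ (mul_nonneg hε toReal_nonneg))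

end ENNReal

namespace MeasureTheory

variable {X : Type*} [MeasurableSpace X]

lemma KLdiv_of_ac_of_integrable {ρ σ : Measure X} (hac : ρ ≪ σ) (hint : Integrable (llr ρ σ) ρ) :
    KLdiv ρ σ = ENNReal.ofReal (∫ x, llr ρ σ x ∂ρ) :=
  if_pos ⟨hac, hint⟩

lemma ac_and_integrable_of_KLdiv_ne_top {ρ σ : Measure X} (h : KLdiv ρ σ ≠ ⊤) :
    ρ ≪ σ ∧ Integrable (llr ρ σ) ρ := by
  by_contra hn
  exact h (if_neg hn)

@[simp]
lemma KLdiv_self (ρ : Measure X) [SigmaFinite ρ] : KLdiv ρ ρ = 0 := by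
  rw [KLdiv_of_ac_of_integrable .rfl ((integrable_congr (llr_self ρ)).2 (integrable_zero _ _ _)),
    integral_congr_ae (llr_self ρ)]
  simp

lemma isProbabilityMeasure_mix (σ₁ σ₂ : Measure X) [IsProbabilityMeasure σ₁]
    [IsProbabilityMeasure σ₂] {t : ℝ} (ht : t ∈ Icc 0 1) :
    IsProbabilityMeasure (ENNReal.ofReal (1 - t) • σ₁ + ENNReal.ofReal t • σ₂) := by
  constructor
  simp [← ENNReal.ofReal_add (sub_nonneg.2 ht.2) ht.1]

lemma Measure.AbsolutelyContinuous.mix {ρ σ₁ σ₂ : Measure X} (h₁ : ρ ≪ σ₁) (h₂ : ρ ≪ σ₂) {t : ℝ}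
    (ht : t ∈ Icc 0 1) : ρ ≪ ENNReal.ofReal (1 - t) • σ₁ + ENNReal.ofReal t • σ₂ := by
  rcases ht.2.lt_or_eq with ht1 | rfl
  · exact (h₁.trans (Measure.absolutelyContinuous_smul (by simpa using ht1))).add_right _
  · exact (h₂.trans (Measure.absolutelyContinuous_smul (by simp))).add_right' _

lemma toReal_rnDeriv_add_smul (σ₁ σ₂ κ : Measure X) [IsFiniteMeasure σ₁] [IsFiniteMeasure σ₂]
    [SigmaFinite κ] {a b : ℝ} (ha : 0 ≤ a) (hb : 0 ≤ b) :
    ∀ᵐ x ∂κ, ((ENNReal.ofReal a • σ₁ + ENNReal.ofReal b • σ₂).rnDeriv κ x).toReal =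
      a * (σ₁.rnDeriv κ x).toReal + b * (σ₂.rnDeriv κ x).toReal := by
  have := σ₁.smul_finite (ENNReal.ofReal_ne_top (r := a))
  have := σ₂.smul_finite (ENNReal.ofReal_ne_top (r := b))
  filter_upwards [Measure.rnDeriv_add' (ENNReal.ofReal a • σ₁) (ENNReal.ofReal b • σ₂) κ,
    Measure.rnDeriv_smul_left_of_ne_top' σ₁ κ ENNReal.ofReal_ne_top,
    Measure.rnDeriv_smul_left_of_ne_top' σ₂ κ ENNReal.ofReal_ne_top,
    Measure.rnDeriv_lt_top σ₁ κ, Measure.rnDeriv_lt_top σ₂ κ] with x hadd h₁ h₂ hlt₁ hlt₂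
  rw [hadd, Pi.add_apply, h₁, h₂, Pi.smul_apply, Pi.smul_apply, smul_eq_mul, smul_eq_mul,
    ENNReal.toReal_add (mul_ne_top ofReal_ne_top hlt₁.ne) (mul_ne_top ofReal_ne_top hlt₂.ne),
    ENNReal.toReal_mul, ENNReal.toReal_mul, ENNReal.toReal_ofReal ha, ENNReal.toReal_ofReal hb]

lemma llr_ae_eq_neg_log_rnDeriv {ρ σ : Measure X} [SigmaFinite ρ] [SigmaFinite σ] (h : ρ ≪ σ) :
    llr ρ σ =ᵐ[ρ] fun x ↦ -log (σ.rnDeriv ρ x).toReal := by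
  filter_upwards [neg_llr h] with x hx
  change llr ρ σ x = -llr σ ρ x
  rw [← hx, Pi.neg_apply, neg_neg]

lemma toReal_rnDeriv_pos {ρ σ : Measure X} [SigmaFinite ρ] [SigmaFinite σ] (h : ρ ≪ σ) :
    ∀ᵐ x ∂ρ, 0 < (σ.rnDeriv ρ x).toReal := by
  filter_upwards [Measure.rnDeriv_pos' h, Measure.rnDeriv_lt_top σ ρ] with x h0 hlt
  exact ENNReal.toReal_pos h0.ne' hlt.ne

variable (ρ σ₁ σ₂ ν : Measure X) [IsFiniteMeasure ρ] [IsFiniteMeasure σ₁] [IsFiniteMeasure σ₂]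
  [IsFiniteMeasure ν] {t : ℝ}

lemma KLdiv_mix_right_le_of_ne_top (ht : t ∈ Icc 0 1) (h₁ : KLdiv ρ σ₁ ≠ ⊤)
    (h₂ : KLdiv ρ σ₂ ≠ ⊤) :
    KLdiv ρ (ENNReal.ofReal (1 - t) • σ₁ + ENNReal.ofReal t • σ₂) ≤
      ENNReal.ofReal (1 - t) * KLdiv ρ σ₁ + ENNReal.ofReal t * KLdiv ρ σ₂ := by
  obtain ⟨hac₁, hint₁⟩ := ac_and_integrable_of_KLdiv_ne_top h₁
  obtain ⟨hac₂, hint₂⟩ := ac_and_integrable_of_KLdiv_ne_top h₂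
  set β := ENNReal.ofReal (1 - t) • σ₁ + ENNReal.ofReal t • σ₂
  have := σ₁.smul_finite (ENNReal.ofReal_ne_top (r := 1 - t))
  have := σ₂.smul_finite (ENNReal.ofReal_ne_top (r := t))
  have hac : ρ ≪ β := hac₁.mix hac₂ ht
  have hβ : ∀ᵐ x ∂ρ, (β.rnDeriv ρ x).toReal =
      (1 - t) * (σ₁.rnDeriv ρ x).toReal + t * (σ₂.rnDeriv ρ x).toReal :=
    toReal_rnDeriv_add_smul σ₁ σ₂ ρ (sub_nonneg.2 ht.2) ht.1
  set bound := fun x ↦ (1 - t) * llr ρ σ₁ x + t * llr ρ σ₂ x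
  have hint_bound : Integrable bound ρ := (hint₁.const_mul _).add (hint₂.const_mul _)
  have hle : llr ρ β ≤ᵐ[ρ] bound := by
    filter_upwards [llr_ae_eq_neg_log_rnDeriv hac, llr_ae_eq_neg_log_rnDeriv hac₁,
      llr_ae_eq_neg_log_rnDeriv hac₂, hβ, toReal_rnDeriv_pos hac₁, toReal_rnDeriv_pos hac₂]
      with x h h₁ h₂ hβ hpos₁ hpos₂
    have hconc := strictConcaveOn_log_Ioi.concaveOn.2 hpos₁ hpos₂ (sub_nonneg.2 ht.2) ht.1
      (by ring)
    simp only [smul_eq_mul] at hconc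
    simp only [bound, h, h₁, h₂, hβ]
    linarith
  have hge : (fun x ↦ 1 - (β.rnDeriv ρ x).toReal) ≤ᵐ[ρ] llr ρ β := by
    filter_upwards [llr_ae_eq_neg_log_rnDeriv hac, toReal_rnDeriv_pos hac] with x h hpos
    rw [h]
    linarith [log_le_sub_one_of_pos hpos]
  have hint : Integrable (llr ρ β) ρ :=
    integrable_of_le_of_le (measurable_llr _ _).aestronglyMeasurable hge hle
      ((integrable_const 1).sub Measure.integrable_toReal_rnDeriv) hint_bound
  rw [KLdiv_of_ac_of_integrable hac hint, KLdiv_of_ac_of_integrable hac₁ hint₁,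
    KLdiv_of_ac_of_integrable hac₂ hint₂]
  refine ofReal_le_mix ht ((integral_mono_ae hint hint_bound hle).trans_eq ?_)
  rw [integral_add (hint₁.const_mul _) (hint₂.const_mul _), integral_const_mul,
    integral_const_mul]

lemma KLdiv_mix_left_le_of_ne_top (ht : t ∈ Icc 0 1) (h₁ : KLdiv σ₁ ν ≠ ⊤)
    (h₂ : KLdiv σ₂ ν ≠ ⊤) :
    KLdiv (ENNReal.ofReal (1 - t) • σ₁ + ENNReal.ofReal t • σ₂) ν ≤
      ENNReal.ofReal (1 - t) * KLdiv σ₁ ν + ENNReal.ofReal t * KLdiv σ₂ ν := by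
  obtain ⟨hac₁, hint₁⟩ := ac_and_integrable_of_KLdiv_ne_top h₁
  obtain ⟨hac₂, hint₂⟩ := ac_and_integrable_of_KLdiv_ne_top h₂
  set β := ENNReal.ofReal (1 - t) • σ₁ + ENNReal.ofReal t • σ₂
  have := σ₁.smul_finite (ENNReal.ofReal_ne_top (r := 1 - t))
  have := σ₂.smul_finite (ENNReal.ofReal_ne_top (r := t))
  have hac : β ≪ ν := (hac₁.smul_left _).add_left (hac₂.smul_left _)
  have hβ : ∀ᵐ x ∂ν, (β.rnDeriv ν x).toReal =
      (1 - t) * (σ₁.rnDeriv ν x).toReal + t * (σ₂.rnDeriv ν x).toReal :=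
    toReal_rnDeriv_add_smul σ₁ σ₂ ν (sub_nonneg.2 ht.2) ht.1
  set φ : ℝ → ℝ := fun y ↦ y * log y
  set bound := fun x ↦ (1 - t) * φ (σ₁.rnDeriv ν x).toReal + t * φ (σ₂.rnDeriv ν x).toReal
  have hint₁' := (integrable_rnDeriv_mul_log_iff hac₁).2 hint₁
  have hint₂' := (integrable_rnDeriv_mul_log_iff hac₂).2 hint₂
  have hint_bound : Integrable bound ν := (hint₁'.const_mul _).add (hint₂'.const_mul _)
  have hle : (fun x ↦ φ (β.rnDeriv ν x).toReal) ≤ᵐ[ν] bound := by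
    filter_upwards [hβ] with x hβ
    have hconv := convexOn_mul_log.2 (mem_Ici.2 (σ₁.rnDeriv ν x).toReal_nonneg)
      (mem_Ici.2 (σ₂.rnDeriv ν x).toReal_nonneg) (sub_nonneg.2 ht.2) ht.1 (by ring)
    simpa only [φ, bound, hβ, smul_eq_mul] using hconv
  have hge : (fun x ↦ (β.rnDeriv ν x).toReal - 1) ≤ (fun x ↦ φ (β.rnDeriv ν x).toReal) := by
    intro x
    have := InformationTheory.klFun_nonneg (β.rnDeriv ν x).toReal_nonneg
    rw [InformationTheory.klFun_apply] at this
    simp only [φ]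
    linarith
  have hint' : Integrable (fun x ↦ φ (β.rnDeriv ν x).toReal) ν :=
    integrable_of_le_of_le ((Measure.measurable_rnDeriv β ν).ennreal_toReal.mul
        (Measure.measurable_rnDeriv β ν).ennreal_toReal.log).aestronglyMeasurable
      (.of_forall hge) hle (Measure.integrable_toReal_rnDeriv.sub (integrable_const 1)) hint_bound
  rw [KLdiv_of_ac_of_integrable hac ((integrable_rnDeriv_mul_log_iff hac).1 hint'),
    KLdiv_of_ac_of_integrable hac₁ hint₁, KLdiv_of_ac_of_integrable hac₂ hint₂,
    ← integral_rnDeriv_mul_log hac, ← integral_rnDeriv_mul_log hac₁,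
    ← integral_rnDeriv_mul_log hac₂]
  refine ofReal_le_mix ht ((integral_mono_ae hint' hint_bound hle).trans_eq ?_)
  rw [integral_add (hint₁'.const_mul _) (hint₂'.const_mul _), integral_const_mul,
    integral_const_mul]

lemma KLdiv_mix_right_le (ht : t ∈ Icc 0 1) :
    KLdiv ρ (ENNReal.ofReal (1 - t) • σ₁ + ENNReal.ofReal t • σ₂) ≤
      ENNReal.ofReal (1 - t) * KLdiv ρ σ₁ + ENNReal.ofReal t * KLdiv ρ σ₂ :=
  le_mix_of_ne_top (f := fun t ↦ KLdiv ρ (ENNReal.ofReal (1 - t) • σ₁ + ENNReal.ofReal t • σ₂))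
    ht (by simp) (by simp) (KLdiv_mix_right_le_of_ne_top ρ σ₁ σ₂ ht)

lemma KLdiv_mix_left_le (ht : t ∈ Icc 0 1) :
    KLdiv (ENNReal.ofReal (1 - t) • σ₁ + ENNReal.ofReal t • σ₂) ν ≤
      ENNReal.ofReal (1 - t) * KLdiv σ₁ ν + ENNReal.ofReal t * KLdiv σ₂ ν :=
  le_mix_of_ne_top (f := fun t ↦ KLdiv (ENNReal.ofReal (1 - t) • σ₁ + ENNReal.ofReal t • σ₂) ν)
    ht (by simp) (by simp) (KLdiv_mix_left_le_of_ne_top σ₁ σ₂ ν ht)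

end MeasureTheory

theorem exists_perturbed_marginal_general
    {X : Type*} [MeasurableSpace X]
    (μc μa : Measure X) [IsProbabilityMeasure μc] [IsProbabilityMeasure μa]
    (ε : ℝ) (hε : ε ∈ Set.Ioc (0 : ℝ) 1)
    (μ : Measure X) (hμ : μ = ENNReal.ofReal (1 - ε) • μc + ENNReal.ofReal ε • μa)
    (hfin' : KLdiv μc μa ≠ ⊤)
    (ρ : ℝ) (hρ : 0 ≤ ρ) :
    (∃ α : Measure X, IsProbabilityMeasure α ∧ KLdiv μ α ≤ ENNReal.ofReal ρ ∧
        KLdiv μc α ≤ ENNReal.ofReal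
          (max 0 (1 - ρ / (ε * (KLdiv μa μc).toReal)) * (ε * (KLdiv μc μa).toReal))) ∧
      (⨅ (α : Measure X) (_ : IsProbabilityMeasure α) (_ : KLdiv μ α ≤ ENNReal.ofReal ρ),
          KLdiv μc α) ≤ ENNReal.ofReal
          (max 0 (1 - ρ / (ε * (KLdiv μa μc).toReal)) * (ε * (KLdiv μc μa).toReal)) := by
  have hε' : ε ∈ Icc 0 1 := Ioc_subset_Icc_self hε
  set lam := max 0 (1 - ρ / (ε * (KLdiv μa μc).toReal))
  have hlam : lam ∈ Icc 0 1 := ⟨le_max_left _ _, max_le zero_le_one (by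
    linarith [div_nonneg hρ (mul_nonneg hε'.1 (KLdiv μa μc).toReal_nonneg)])⟩
  have : IsProbabilityMeasure μ := hμ ▸ isProbabilityMeasure_mix μc μa hε'
  set α := ENNReal.ofReal (1 - lam) • μc + ENNReal.ofReal lam • μ
  have hμμc : KLdiv μ μc ≤ ENNReal.ofReal ε * KLdiv μa μc := by
    simpa [hμ] using KLdiv_mix_left_le μc μa μc hε'
  have hμcμ : KLdiv μc μ ≤ ENNReal.ofReal ε * KLdiv μc μa := by
    simpa [hμ] using KLdiv_mix_right_le μc μc μa hε'
  have hfit : KLdiv μ α ≤ ENNReal.ofReal ρ := calc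
    KLdiv μ α ≤ ENNReal.ofReal (1 - lam) * KLdiv μ μc := by
      simpa using KLdiv_mix_right_le μ μc μ hlam
    _ ≤ ENNReal.ofReal (1 - lam) * (ENNReal.ofReal ε * KLdiv μa μc) := by gcongr
    _ ≤ ENNReal.ofReal ρ := ofReal_one_sub_max_zero_one_sub_div_mul_le hρ hε'.1 _
  have hclean : KLdiv μc α ≤ ENNReal.ofReal (lam * (ε * (KLdiv μc μa).toReal)) := calc
    KLdiv μc α ≤ ENNReal.ofReal lam * KLdiv μc μ := by
      simpa using KLdiv_mix_right_le μc μc μ hlam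
    _ ≤ ENNReal.ofReal lam * (ENNReal.ofReal ε * KLdiv μc μa) := by gcongr
    _ = ENNReal.ofReal (lam * (ε * (KLdiv μc μa).toReal)) := by
      rw [ENNReal.ofReal_mul hlam.1, ENNReal.ofReal_mul hε'.1, ENNReal.ofReal_toReal hfin']
  have hα : IsProbabilityMeasure α := isProbabilityMeasure_mix μc μ hlam
  exact ⟨⟨α, hα, hfit, hclean⟩, iInf₂_le_of_le α hα (iInf_le_of_le hfit hclean)⟩

/-- The construction in the proof of Theorem 1: for a Huber-contaminated measure
`μ = (1-ε)μ_c + ε μ_a`, for every `ρ ≥ 0` there is a probability measure `α` with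
`KL(μ,α) ≤ ρ` whose KL divergence from the clean measure `μ_c` is controlled; consequently
the corresponding infimum is bounded by the same quantity. -/
theorem exists_perturbed_marginal
    {X : Type*} [MetricSpace X] [CompleteSpace X] [SecondCountableTopology X]
    [MeasurableSpace X] [BorelSpace X]
    (μc μa : Measure X) [IsProbabilityMeasure μc] [IsProbabilityMeasure μa]
    (ε : ℝ) (hε : ε ∈ Set.Ioc (0 : ℝ) 1)
    (μ : Measure X) (hμ : μ = ENNReal.ofReal (1 - ε) • μc + ENNReal.ofReal ε • μa)
    (hfin : KLdiv μa μc ≠ ⊤) (hpos : 0 < KLdiv μa μc) (hfin' : KLdiv μc μa ≠ ⊤)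
    (ρ : ℝ) (hρ : 0 ≤ ρ) :
    (∃ α : Measure X, IsProbabilityMeasure α ∧ KLdiv μ α ≤ ENNReal.ofReal ρ ∧
        KLdiv μc α ≤ ENNReal.ofReal
          (max 0 (1 - ρ / (ε * (KLdiv μa μc).toReal)) * (ε * (KLdiv μc μa).toReal))) ∧
      (⨅ (α : Measure X) (_ : IsProbabilityMeasure α) (_ : KLdiv μ α ≤ ENNReal.ofReal ρ),
          KLdiv μc α) ≤ ENNReal.ofReal
          (max 0 (1 - ρ / (ε * (KLdiv μa μc).toReal)) * (ε * (KLdiv μc μa).toReal)) :=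
  exists_perturbed_marginal_general μc μa ε hε μ hμ hfin' ρ hρ
end

section
/- Let n ≥ 1, let a ∈ ℝ^n with a_i ≥ 0, let b, μ ∈ Δ^n with all entries strictly positive, and let c > 0 and w ≥ 0. Define, for α ∈ Δ^n with all entries strictly positive, G(α) = ∑_i (a_i log(a_i/α_i) − a_i + α_i) + (1/c)·∑_i b_i log(b_i/α_i) + w·∑_i μ_i log(μ_i/α_i) (with the convention 0·log 0 = 0). Then the vector α̂ defined by α̂_i = (a_i + b_i/c + w·μ_i)/(∑_j a_j + 1/c + w) has strictly positive entries, lies in Δ^n, and satisfies G(α̂) ≤ G(α) for every α ∈ Δ^n with all entries strictly positive. -/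
/-!
Writing `m i = a i + b i / c + w * μ i`, the objective is, up to a constant, `∑ α i - ∑ m i * log (α i)`;
on the simplex the first sum is `1`, and Gibbs' inequality (from `log x ≤ x - 1`) says that
`∑ m i * log (α i)` is maximal at `α = m / ∑ m`, which is `α̂`.
-/

open Finset Real

theorem mul_log_div_of_ne_zero (x : ℝ) {y : ℝ} (hy : y ≠ 0) :
    x * log (x / y) = x * log x - x * log y := by
  rcases eq_or_ne x 0 with rfl | hx
  · simp
  · rw [log_div hx hy, mul_sub]

theorem mul_log_sub_log_div_le {m x S : ℝ} (hm : 0 ≤ m) (hx : 0 < x) (hmS : m ≤ S) :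
    m * (log x - log (m / S)) ≤ S * x - m := by
  rcases hm.eq_or_lt with rfl | hm
  · nlinarith
  have hS : 0 < S := hm.trans_le hmS
  calc m * (log x - log (m / S)) = m * log (S * x / m) := by
        rw [← log_div hx.ne' (by positivity)]; congr 2; field_simp
    _ ≤ m * (S * x / m - 1) := by gcongr; exact log_le_sub_one_of_pos (by positivity)
    _ = S * x - m := by field_simp

/-- Gibbs' inequality, for unnormalized weights `m`. -/
theorem sum_mul_log_le_sum_mul_log_div_sum {ι : Type*} (s : Finset ι) {m x : ι → ℝ}
    (hm : ∀ i ∈ s, 0 ≤ m i) (hx : ∀ i ∈ s, 0 < x i) (hxsum : ∑ i ∈ s, x i = 1) :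
    ∑ i ∈ s, m i * log (x i) ≤ ∑ i ∈ s, m i * log (m i / ∑ j ∈ s, m j) := by
  set S := ∑ j ∈ s, m j
  have hterm : ∀ i ∈ s, m i * (log (x i) - log (m i / S)) ≤ S * x i - m i := fun i hi =>
    mul_log_sub_log_div_le (hm i hi) (hx i hi) (single_le_sum hm hi)
  have := sum_le_sum hterm
  rw [sum_sub_distrib, ← mul_sum, hxsum, mul_one, sub_self] at this
  simpa only [mul_sub, sum_sub_distrib, sub_nonpos] using this

theorem relEntropy_objective_eq {ι : Type*} (s : Finset ι) (a b μ α : ι → ℝ) (c w : ℝ)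
    (hα : ∀ i ∈ s, α i ≠ 0) :
    ∑ i ∈ s, (a i * log (a i / α i) - a i + α i)
        + (1 / c) * ∑ i ∈ s, b i * log (b i / α i)
        + w * ∑ i ∈ s, μ i * log (μ i / α i)
      = (∑ i ∈ s, (a i * log (a i) - a i + (1 / c) * (b i * log (b i)) + w * (μ i * log (μ i))))
        + ∑ i ∈ s, α i - ∑ i ∈ s, (a i + b i / c + w * μ i) * log (α i) := by
  simp only [mul_sum, ← sum_add_distrib, ← sum_sub_distrib]
  refine sum_congr rfl fun i hi => ?_
  rw [mul_log_div_of_ne_zero _ (hα i hi), mul_log_div_of_ne_zero _ (hα i hi),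
    mul_log_div_of_ne_zero _ (hα i hi)]
  ring

theorem alpha_subproblem_closed_form_general
    (n : ℕ) (a b μ : Fin n → ℝ)
    (ha : ∀ i, 0 ≤ a i)
    (hb : ∀ i, 0 < b i) (hbsum : ∑ i, b i = 1)
    (hμ : ∀ i, 0 < μ i) (hμsum : ∑ i, μ i = 1)
    (c w : ℝ) (hc : 0 < c) (hw : 0 ≤ w)
    (G : (Fin n → ℝ) → ℝ)
    (hG : G = fun α => ∑ i, (a i * Real.log (a i / α i) - a i + α i)
      + (1 / c) * ∑ i, b i * Real.log (b i / α i)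
      + w * ∑ i, μ i * Real.log (μ i / α i))
    (αhat : Fin n → ℝ)
    (hαhat : αhat = fun i => (a i + b i / c + w * μ i) / ((∑ j, a j) + 1 / c + w)) :
    (∀ i, 0 < αhat i) ∧ (∑ i, αhat i = 1) ∧
      ∀ α : Fin n → ℝ, (∀ i, 0 < α i) → (∑ i, α i = 1) → G αhat ≤ G α := by
  set m : Fin n → ℝ := fun i => a i + b i / c + w * μ i
  have hm : ∀ i, 0 < m i := fun i => by
    have := ha i; have := hb i; have := hμ i; positivity
  have hmsum : ∑ i, m i = ∑ j, a j + 1 / c + w := by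
    simp only [m, sum_add_distrib, ← sum_div, ← mul_sum, hbsum, hμsum, mul_one]
  have hαhat_eq : αhat = fun i => m i / ∑ j, m j := by rw [hαhat, hmsum]
  have hmsum_pos : 0 < ∑ j, m j := by
    rw [hmsum]; have := sum_nonneg fun i (_ : i ∈ univ) => ha i; positivity
  have hpos : ∀ i, 0 < αhat i := fun i => by rw [hαhat_eq]; exact div_pos (hm i) hmsum_pos
  have hsum : ∑ i, αhat i = 1 := by rw [hαhat_eq, ← sum_div, div_self hmsum_pos.ne']
  refine ⟨hpos, hsum, fun α hα hαsum => ?_⟩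
  have hGibbs := sum_mul_log_le_sum_mul_log_div_sum univ (fun i _ => (hm i).le)
    (fun i _ => hα i) hαsum
  subst hG; dsimp only
  rw [relEntropy_objective_eq _ _ _ _ _ _ _ (fun i _ => (hpos i).ne'),
    relEntropy_objective_eq _ _ _ _ _ _ _ (fun i _ => (hα i).ne'), hsum, hαsum, hαhat_eq]
  linarith

/-- Closed-form solution of the penalized `α`-subproblem: `α̂` is feasible (strictly positive
entries, lies in the simplex) and minimizes `G` over the strictly positive simplex. -/
theorem alpha_subproblem_closed_form
    (n : ℕ) (hn : 1 ≤ n) (a b μ : Fin n → ℝ)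
    (ha : ∀ i, 0 ≤ a i)
    (hb : ∀ i, 0 < b i) (hbsum : ∑ i, b i = 1)
    (hμ : ∀ i, 0 < μ i) (hμsum : ∑ i, μ i = 1)
    (c w : ℝ) (hc : 0 < c) (hw : 0 ≤ w)
    (G : (Fin n → ℝ) → ℝ)
    (hG : G = fun α => ∑ i, (a i * Real.log (a i / α i) - a i + α i)
      + (1 / c) * ∑ i, b i * Real.log (b i / α i)
      + w * ∑ i, μ i * Real.log (μ i / α i))
    (αhat : Fin n → ℝ)
    (hαhat : αhat = fun i => (a i + b i / c + w * μ i) / ((∑ j, a j) + 1 / c + w)) :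
    (∀ i, 0 < αhat i) ∧ (∑ i, αhat i = 1) ∧
      ∀ α : Fin n → ℝ, (∀ i, 0 < α i) → (∑ i, α i = 1) → G αhat ≤ G α :=
  alpha_subproblem_closed_form_general n a b μ ha hb hbsum hμ hμsum c w hc hw G hG αhat hαhat
end

section
/- Let n ≥ 1, let μ ∈ Δ^n with all entries strictly positive, let t ∈ ℝ^n with all entries strictly positive, and set T = ∑_i t_i. Define q : [0,∞) → ℝ by q(w) = ∑_i μ_i·log( μ_i·(T + w) / (t_i + w·μ_i) ). Then q is monotonically non-increasing on [0,∞), i.e., for all 0 ≤ w_1 ≤ w_2, q(w_2) ≤ q(w_1). -/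
/-!
The penalized marginal `α̂(w)ᵢ = (tᵢ + w μᵢ)/(T + w)` moves along a segment towards `μ`:
for `w₁ ≤ w₂`, `α̂(w₂)` is a convex combination `(1-s) α̂(w₁) + s μ`. As `α ↦ KL(μ ‖ α)` is
convex and vanishes at `α = μ`, `KL(μ ‖ α̂(w₂)) ≤ (1-s) KL(μ ‖ α̂(w₁)) ≤ KL(μ ‖ α̂(w₁))`,
the last step by Gibbs' inequality.
-/

open Finset Real

noncomputable section

variable {ι : Type*} [Fintype ι]

def discreteKL (μ α : ι → ℝ) : ℝ := ∑ i, μ i * log (μ i / α i)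

theorem discreteKL_nonneg {μ α : ι → ℝ} (hμ : ∀ i, 0 ≤ μ i) (hα : ∀ i, 0 < α i)
    (hsum : ∑ i, α i ≤ ∑ i, μ i) : 0 ≤ discreteKL μ α := by
  have hterm : ∀ i, μ i - α i ≤ μ i * log (μ i / α i) := by
    intro i
    rcases (hμ i).eq_or_lt with h0 | hpos
    · simp [← h0, (hα i).le]
    · have hlog := log_le_sub_one_of_pos (div_pos (hα i) hpos)
      rw [log_div (hα i).ne' hpos.ne'] at hlog
      rw [log_div hpos.ne' (hα i).ne']
      have hcancel : μ i * (α i / μ i - 1) = α i - μ i := by field_simp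
      linarith [mul_le_mul_of_nonneg_left hlog hpos.le]
  calc (0 : ℝ) ≤ ∑ i, (μ i - α i) := by rw [sum_sub_distrib]; linarith
    _ ≤ discreteKL μ α := sum_le_sum fun i _ => hterm i

theorem discreteKL_mix_le {μ α : ι → ℝ} (hμ : ∀ i, 0 < μ i) (hα : ∀ i, 0 < α i)
    {s : ℝ} (hs₀ : 0 ≤ s) (hs₁ : s ≤ 1) :
    discreteKL μ (fun i => (1 - s) * α i + s * μ i) ≤ (1 - s) * discreteKL μ α := by
  rw [discreteKL, discreteKL, mul_sum]
  refine sum_le_sum fun i _ => ?_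
  have hmix : (1 - s) * log (α i) + s * log (μ i) ≤ log ((1 - s) * α i + s * μ i) :=
    strictConcaveOn_log_Ioi.concaveOn.2 (hα i) (hμ i) (by linarith) hs₀ (by ring)
  have hmix_pos : 0 < (1 - s) * α i + s * μ i := by
    rcases hs₁.lt_or_eq with hs | rfl
    · exact add_pos_of_pos_of_nonneg (mul_pos (sub_pos.2 hs) (hα i)) (mul_nonneg hs₀ (hμ i).le)
    · simpa using hμ i
  rw [log_div (hμ i).ne' hmix_pos.ne', log_div (hμ i).ne' (hα i).ne']
  linarith [mul_le_mul_of_nonneg_left hmix (hμ i).le]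

theorem discreteKL_mix_le_self {μ α : ι → ℝ} (hμ : ∀ i, 0 < μ i) (hα : ∀ i, 0 < α i)
    (hsum : ∑ i, α i ≤ ∑ i, μ i) {s : ℝ} (hs₀ : 0 ≤ s) (hs₁ : s ≤ 1) :
    discreteKL μ (fun i => (1 - s) * α i + s * μ i) ≤ discreteKL μ α := by
  calc _ ≤ (1 - s) * discreteKL μ α := discreteKL_mix_le hμ hα hs₀ hs₁
    _ ≤ discreteKL μ α :=
      mul_le_of_le_one_left (discreteKL_nonneg (fun i => (hμ i).le) hα hsum) (by linarith)

def penalizedMarginal (t μ : ι → ℝ) (w : ℝ) : ι → ℝ :=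
  fun i => (t i + w * μ i) / (∑ j, t j + w)

theorem penalizedMarginal_pos {t μ : ι → ℝ} (ht : ∀ i, 0 < t i) (hμ : ∀ i, 0 < μ i)
    [Nonempty ι] {w : ℝ} (hw : 0 ≤ w) (i : ι) : 0 < penalizedMarginal t μ w i := by
  have hT : 0 < ∑ j, t j := sum_pos (fun j _ => ht j) univ_nonempty
  exact div_pos (add_pos_of_pos_of_nonneg (ht i) (mul_nonneg hw (hμ i).le)) (by linarith)

theorem sum_penalizedMarginal {t μ : ι → ℝ} (hμsum : ∑ i, μ i = 1) {w : ℝ}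
    (hw : ∑ j, t j + w ≠ 0) : ∑ i, penalizedMarginal t μ w i = 1 := by
  simp only [penalizedMarginal]
  rw [← sum_div, sum_add_distrib, ← mul_sum, hμsum, mul_one, div_self hw]

theorem penalizedMarginal_eq_mix (t μ : ι → ℝ) {w₁ w₂ : ℝ} (h₁ : ∑ j, t j + w₁ ≠ 0)
    (h₂ : ∑ j, t j + w₂ ≠ 0) :
    penalizedMarginal t μ w₂ = fun i =>
      (1 - (w₂ - w₁) / (∑ j, t j + w₂)) * penalizedMarginal t μ w₁ i +
        (w₂ - w₁) / (∑ j, t j + w₂) * μ i := by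
  funext i
  simp only [penalizedMarginal]
  field_simp
  ring

end

/-- The dual function `q(w) = ∑ᵢ μᵢ log(μᵢ(T+w)/(tᵢ+wμᵢ))` is monotonically
non-increasing on `[0,∞)`. -/
theorem dual_function_antitone
    (n : ℕ) (hn : 1 ≤ n) (μ t : Fin n → ℝ)
    (hμ : ∀ i, 0 < μ i) (hμsum : ∑ i, μ i = 1)
    (ht : ∀ i, 0 < t i) (T : ℝ) (hT : T = ∑ i, t i)
    (q : ℝ → ℝ)
    (hq : q = fun w => ∑ i, μ i * Real.log (μ i * (T + w) / (t i + w * μ i))) :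
    AntitoneOn q (Set.Ici (0 : ℝ)) := by
  subst hq hT
  have : Nonempty (Fin n) := ⟨⟨0, hn⟩⟩
  have hT_pos : 0 < ∑ i, t i := sum_pos (fun i _ => ht i) univ_nonempty
  simp only [← div_div_eq_mul_div]
  intro w₁ (hw₁ : 0 ≤ w₁) w₂ (hw₂ : 0 ≤ w₂) hw
  have h₁ : 0 < ∑ j, t j + w₁ := by linarith
  have h₂ : 0 < ∑ j, t j + w₂ := by linarith
  change discreteKL μ (penalizedMarginal t μ w₂) ≤ discreteKL μ (penalizedMarginal t μ w₁)
  rw [penalizedMarginal_eq_mix t μ h₁.ne' h₂.ne']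
  exact discreteKL_mix_le_self hμ (penalizedMarginal_pos ht hμ hw₁)
    (by rw [sum_penalizedMarginal hμsum h₁.ne', hμsum])
    (div_nonneg (by linarith) h₂.le) ((div_le_one h₂).2 (by linarith))
end

section
/- Let n ≥ 1, let μ ∈ Δ^n with all entries strictly positive, let t ∈ ℝ^n with all entries strictly positive, and set T = ∑_i t_i. Define q : [0,∞) → ℝ by q(w) = ∑_i μ_i·log( μ_i·(T + w) / (t_i + w·μ_i) ). Then q is convex on [0,∞). -/
open Finset

/-! The marginal `α̂(w)ᵢ = (tᵢ + w μᵢ)/(T + w)` is the point `(1 - λ) μ + λ ν` of the segment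
from `μ` to `ν = t / T`, at `λ(w) = T / (T + w)`. Hence `q = g ∘ λ` with
`g(λ) = d_KL(μ, (1 - λ) μ + λ ν)`. Since `-log` is convex, `g` is convex on `[0, 1]`; Gibbs'
inequality gives `g ≥ 0 = g(0)`, so `g` is nondecreasing there. As `λ` is convex on `[0, ∞)`,
so is `g ∘ λ`. -/

open Real AffineMap

theorem ConvexOn.comp_of_mapsTo {E : Type*} [AddCommMonoid E] [SMul ℝ E] {s : Set E} {t : Set ℝ}
    {f : E → ℝ} {g : ℝ → ℝ} (hg : ConvexOn ℝ t g) (hf : ConvexOn ℝ s f) (hg' : MonotoneOn g t)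
    (hst : Set.MapsTo f s t) : ConvexOn ℝ s (g ∘ f) :=
  ⟨hf.1, fun _ hx _ hy _ _ ha hb hab =>
    (hg' (hst (hf.1 hx hy ha hb hab)) (hg.1 (hst hx) (hst hy) ha hb hab)
      (hf.2 hx hy ha hb hab)).trans (hg.2 (hst hx) (hst hy) ha hb hab)⟩

theorem ConvexOn.finset_sum {E ι : Type*} [AddCommMonoid E] [SMul ℝ E] {s : Set E}
    (u : Finset ι) {f : ι → E → ℝ} (hs : Convex ℝ s) (hf : ∀ i ∈ u, ConvexOn ℝ s (f i)) :
    ConvexOn ℝ s fun x => ∑ i ∈ u, f i x := by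
  classical
  induction u using Finset.induction_on with
  | empty => simpa using convexOn_const 0 hs
  | insert j u hj ih =>
    simp only [Finset.sum_insert hj]
    exact (hf j (mem_insert_self _ _)).add (ih fun i hi => hf i (mem_insert_of_mem hi))

theorem ConvexOn.monotoneOn_of_isMinOn {f : ℝ → ℝ} {a b : ℝ} (hf : ConvexOn ℝ (Set.Icc a b) f)
    (hmin : IsMinOn f (Set.Icc a b) a) : MonotoneOn f (Set.Icc a b) := by
  intro x hx y hy hxy
  rcases hx.1.eq_or_lt with rfl | hax
  · exact hmin hy
  · exact hf.le_right_of_left_le'' (Set.left_mem_Icc.2 (hx.1.trans hx.2)) hy hax hxy (hmin hx)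

theorem convexOn_div_add {c : ℝ} (hc : 0 ≤ c) (a : ℝ) :
    ConvexOn ℝ (Set.Ioi (-a)) fun x => c / (a + x) := by
  have h := ((convexOn_zpow (𝕜 := ℝ) (-1)).translate_right a).smul hc
  have hs : (fun z => a + z) ⁻¹' Set.Ioi 0 = Set.Ioi (-a) := by
    ext x; simp [neg_lt_iff_pos_add]
  rw [hs] at h
  refine h.congr fun x _ => ?_
  simp [div_eq_mul_inv]

theorem convexOn_mul_log_div {a : ℝ} (ha : 0 ≤ a) :
    ConvexOn ℝ (Set.Ioi 0) fun x => a * log (a / x) := by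
  refine ((strictConcaveOn_log_Ioi.concaveOn.neg.smul ha).add_const (a * log a)).congr
    fun x hx => ?_
  rcases ha.eq_or_lt with rfl | ha
  · simp
  · simp only [Pi.add_apply, Pi.neg_apply, smul_eq_mul, log_div ha.ne' (Set.mem_Ioi.1 hx).ne']
    ring

noncomputable def dKL {ι : Type*} [Fintype ι] (μ ν : ι → ℝ) : ℝ := ∑ i, μ i * log (μ i / ν i)

section dKL

variable {ι : Type*} [Fintype ι] {μ ν : ι → ℝ}

theorem dKL_self (μ : ι → ℝ) : dKL μ μ = 0 := by
  refine Finset.sum_eq_zero fun i _ => ?_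
  rcases eq_or_ne (μ i) 0 with h | h <;> simp [h]

theorem dKL_nonneg (hμ : ∀ i, 0 ≤ μ i) (hν : ∀ i, 0 < ν i) (hsum : ∑ i, ν i ≤ ∑ i, μ i) :
    0 ≤ dKL μ ν := by
  have hterm : ∀ i, μ i - ν i ≤ μ i * log (μ i / ν i) := by
    intro i
    rcases (hμ i).eq_or_lt with h | h
    · simp [← h, (hν i).le]
    · have := one_sub_inv_le_log_of_pos (div_pos h (hν i))
      rw [inv_div] at this
      calc μ i - ν i = μ i * (1 - ν i / μ i) := by field_simp
        _ ≤ μ i * log (μ i / ν i) := mul_le_mul_of_nonneg_left this h.le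
  calc 0 ≤ ∑ i, (μ i - ν i) := by rw [sum_sub_distrib]; linarith
    _ ≤ dKL μ ν := sum_le_sum fun i _ => hterm i

theorem convexOn_dKL_lineMap (hμ : ∀ i, 0 < μ i) (hν : ∀ i, 0 < ν i) :
    ConvexOn ℝ (Set.Icc (0 : ℝ) 1) fun s => dKL μ (lineMap μ ν s) := by
  simp only [dKL, pi_lineMap_apply]
  refine ConvexOn.finset_sum _ (convex_Icc 0 1) fun i _ => ?_
  refine ((convexOn_mul_log_div (hμ i).le).comp_affineMap (lineMap (μ i) (ν i))).subset
    (fun s hs => ?_) (convex_Icc 0 1)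
  exact (convex_Ioi (0 : ℝ)).lineMap_mem (hμ i) (hν i) hs

theorem monotoneOn_dKL_lineMap (hμ : ∀ i, 0 < μ i) (hν : ∀ i, 0 < ν i)
    (hsum : ∑ i, ν i ≤ ∑ i, μ i) :
    MonotoneOn (fun s => dKL μ (lineMap μ ν s)) (Set.Icc (0 : ℝ) 1) := by
  refine (convexOn_dKL_lineMap hμ hν).monotoneOn_of_isMinOn fun s hs => ?_
  have hpos : ∀ i, 0 < lineMap μ ν s i := fun i => by
    rw [pi_lineMap_apply]; exact (convex_Ioi (0 : ℝ)).lineMap_mem (hμ i) (hν i) hs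
  have hsum' : ∑ i, lineMap μ ν s i ≤ ∑ i, μ i := by
    simp only [pi_lineMap_apply, lineMap_apply_ring, sum_add_distrib, ← mul_sum]
    nlinarith [hs.1, hs.2]
  simpa [dKL_self] using dKL_nonneg (fun i => (hμ i).le) hpos hsum'

end dKL

theorem dual_function_convex_general
    (n : ℕ) (μ t : Fin n → ℝ)
    (hμ : ∀ i, 0 < μ i) (hμsum : ∑ i, μ i = 1)
    (ht : ∀ i, 0 < t i) (T : ℝ) (hT : T = ∑ i, t i)
    (q : ℝ → ℝ)
    (hq : q = fun w => ∑ i, μ i * Real.log (μ i * (T + w) / (t i + w * μ i))) :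
    ConvexOn ℝ (Set.Ici (0 : ℝ)) q := by
  have hT_pos : 0 < T :=
    hT ▸ sum_pos (fun i _ => ht i) (nonempty_of_sum_ne_zero (f := μ) (by simp [hμsum]))
  set ν : Fin n → ℝ := fun i => t i / T
  have hν : ∀ i, 0 < ν i := fun i => div_pos (ht i) hT_pos
  have hν_sum : ∑ i, ν i = ∑ i, μ i := by simp [ν, ← sum_div, ← hT, hT_pos.ne', hμsum]
  have hweight : ConvexOn ℝ (Set.Ici 0) fun w => T / (T + w) :=
    (convexOn_div_add hT_pos.le T).subset (fun w (hw : 0 ≤ w) => show -T < w by linarith)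
      (convex_Ici 0)
  have hmaps : Set.MapsTo (fun w => T / (T + w)) (Set.Ici 0) (Set.Icc 0 1) :=
    fun w (hw : 0 ≤ w) => ⟨by positivity, div_le_one_of_le₀ (by linarith) (by linarith)⟩
  refine ((convexOn_dKL_lineMap hμ hν).comp_of_mapsTo hweight
    (monotoneOn_dKL_lineMap hμ hν hν_sum.le) hmaps).congr fun w hw => ?_
  have hTw : T + w ≠ 0 := by linarith [Set.mem_Ici.1 hw]
  simp only [hq, Function.comp, dKL, pi_lineMap_apply, lineMap_apply_ring, ν]
  refine sum_congr rfl fun i _ => ?_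
  congr 2
  field_simp
  ring

/-- The dual function `q(w) = ∑ᵢ μᵢ log(μᵢ(T+w)/(tᵢ+wμᵢ))` is convex on `[0,∞)`. -/
theorem dual_function_convex
    (n : ℕ) (hn : 1 ≤ n) (μ t : Fin n → ℝ)
    (hμ : ∀ i, 0 < μ i) (hμsum : ∑ i, μ i = 1)
    (ht : ∀ i, 0 < t i) (T : ℝ) (hT : T = ∑ i, t i)
    (q : ℝ → ℝ)
    (hq : q = fun w => ∑ i, μ i * Real.log (μ i * (T + w) / (t i + w * μ i))) :
    ConvexOn ℝ (Set.Ici (0 : ℝ)) q :=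
  dual_function_convex_general n μ t hμ hμsum ht T hT q hq
end

section
/- Let I ⊆ ℝ be an interval (an order-connected set of reals) and let p : ℝ → ℝ be twice differentiable on I, convex on I, and monotonically non-increasing on I. Assume there exist x̃, x̄ ∈ I with p(x̃) > 0 and p(x̄) < 0. Then: (a) p has a unique root on I, i.e., there is exactly one r ∈ I with p(r) = 0; and (b) the Newton iteration defined by x_0 = x̃ and x_{k+1} = x_k − p(x_k)/p'(x_k) is well defined (for every k, x_k ∈ I and p'(x_k) < 0) and the sequence (x_k) converges to r. -/
open Filter Set Topology

/-!
Tangent lines lie below the graph of a convex function. Since `p` is negative somewhere to the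
right of any root, `p' < 0` at every root, and so the tangent at a root forces `p > 0` to its left:
the root is unique. From a point `x ≤ r` the tangent line at `x` lies below `p` and so reaches zero
in `[x, r]`; hence the Newton iterates increase and stay below `r`. Their limit `L` satisfies
`0 ≤ p(x_k) = p'(x_k) (x_k - x_{k+1}) ≤ |p'(x_0)| (x_{k+1} - x_k) → 0` because `p'` is monotone,
so `p(L) = 0` and `L = r`.
-/

namespace ConvexOn

variable {I : Set ℝ} {p : ℝ → ℝ} {x y r : ℝ}

theorem add_deriv_mul_sub_le (hp : ConvexOn ℝ I p) (hx : x ∈ I) (hy : y ∈ I)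
    (hpx : DifferentiableAt ℝ p x) : p x + deriv p x * (y - x) ≤ p y := by
  rcases lt_trichotomy x y with hxy | rfl | hxy
  · have h := hp.deriv_le_slope hx hy hxy hpx
    rw [slope_def_field, le_div_iff₀ (sub_pos.mpr hxy)] at h
    linarith
  · simp
  · have h := hp.slope_le_deriv hy hx hxy hpx
    rw [slope_def_field, div_le_iff₀ (sub_pos.mpr hxy)] at h
    linarith

theorem deriv_neg_of_apply_lt (hp : ConvexOn ℝ I p) (hx : x ∈ I) (hy : y ∈ I) (hxy : x < y)
    (hpxy : p y < p x) (hpx : DifferentiableAt ℝ p x) : deriv p x < 0 := by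
  refine (hp.deriv_le_slope hx hy hxy hpx).trans_lt ?_
  rw [slope_def_field]
  exact div_neg_of_neg_of_pos (sub_neg.mpr hpxy) (sub_pos.mpr hxy)

theorem apply_lt_apply_of_deriv_neg (hp : ConvexOn ℝ I p) (hx : x ∈ I) (hy : y ∈ I)
    (hxy : x < y) (hpy : DifferentiableAt ℝ p y) (hdy : deriv p y < 0) : p y < p x := by
  have htangent := hp.add_deriv_mul_sub_le hy hx hpy
  nlinarith

theorem injOn_of_deriv_neg (hp : ConvexOn ℝ I p) (hd : ∀ x ∈ I, DifferentiableAt ℝ p x) :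
    InjOn p {x ∈ I | deriv p x < 0} := by
  rintro a ⟨ha, hda⟩ b ⟨hb, hdb⟩ hab
  rcases lt_trichotomy a b with h | h | h
  · exact absurd hab (hp.apply_lt_apply_of_deriv_neg ha hb h (hd b hb) hdb).ne'
  · exact h
  · exact absurd hab (hp.apply_lt_apply_of_deriv_neg hb ha h (hd a ha) hda).ne

theorem newton_step_mem_Icc (hp : ConvexOn ℝ I p) (hd : ∀ x ∈ I, DifferentiableAt ℝ p x)
    (hx : x ∈ I) (hr : r ∈ I) (hpr : p r = 0) (hdr : deriv p r < 0) (hxr : x ≤ r) :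
    deriv p x < 0 ∧ x - p x / deriv p x ∈ Icc x r := by
  have hdx : deriv p x < 0 := (hp.monotoneOn_deriv hd hx hr hxr).trans_lt hdr
  have hpx : 0 ≤ p x := by
    have htangent := hp.add_deriv_mul_sub_le hr hx (hd r hr)
    nlinarith
  have htangent := hp.add_deriv_mul_sub_le hx hr (hd x hx)
  refine ⟨hdx, ?_, ?_⟩
  · linarith [div_nonpos_of_nonneg_of_nonpos hpx hdx.le]
  · have h : -p x / deriv p x ≤ r - x := by
      rw [div_le_iff_of_neg hdx]
      linarith
    linarith [neg_div (deriv p x) (p x)]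

theorem newton_iterate_mem_Icc (hI : I.OrdConnected) (hp : ConvexOn ℝ I p)
    (hd : ∀ x ∈ I, DifferentiableAt ℝ p x) (hr : r ∈ I) (hpr : p r = 0) (hdr : deriv p r < 0)
    {x : ℕ → ℝ} (hx0 : x 0 ∈ I) (hx0r : x 0 ≤ r)
    (hrec : ∀ k, x (k + 1) = x k - p (x k) / deriv p (x k)) (k : ℕ) :
    x k ∈ Icc (x 0) r := by
  induction k with
  | zero => exact ⟨le_rfl, hx0r⟩
  | succ k ih =>
    have hstep := (hp.newton_step_mem_Icc hd (hI.out hx0 hr ih) hr hpr hdr ih.2).2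
    rw [hrec k]
    exact ⟨ih.1.trans hstep.1, hstep.2⟩

theorem tendsto_newton (hI : I.OrdConnected) (hp : ConvexOn ℝ I p)
    (hd : ∀ x ∈ I, DifferentiableAt ℝ p x) (hr : r ∈ I) (hpr : p r = 0) (hdr : deriv p r < 0)
    {x : ℕ → ℝ} (hx0 : x 0 ∈ I) (hx0r : x 0 ≤ r)
    (hrec : ∀ k, x (k + 1) = x k - p (x k) / deriv p (x k)) :
    (∀ k, x k ∈ I ∧ deriv p (x k) < 0) ∧ Tendsto x atTop (𝓝 r) := by
  have hsub : Icc (x 0) r ⊆ I := hI.out hx0 hr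
  have hiter := hp.newton_iterate_mem_Icc hI hd hr hpr hdr hx0 hx0r hrec
  have hstep (k : ℕ) : deriv p (x k) < 0 ∧ x (k + 1) ∈ Icc (x k) r :=
    hrec k ▸ hp.newton_step_mem_Icc hd (hsub (hiter k)) hr hpr hdr (hiter k).2
  refine ⟨fun k => ⟨hsub (hiter k), (hstep k).1⟩, ?_⟩
  have hlim : Tendsto x atTop (𝓝 (⨆ k, x k)) :=
    tendsto_atTop_ciSup (monotone_nat_of_le_succ fun k => (hstep k).2.1)
      ⟨r, by rintro _ ⟨k, rfl⟩; exact (hiter k).2⟩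
  set L := ⨆ k, x k
  have hL : L ∈ Icc (x 0) r := isClosed_Icc.mem_of_tendsto hlim (Eventually.of_forall hiter)
  have hresidual (k : ℕ) : p (x k) ≤ -deriv p (x 0) * (x (k + 1) - x k) := by
    have hd_le : deriv p (x 0) ≤ deriv p (x k) :=
      hp.monotoneOn_deriv hd hx0 (hsub (hiter k)) (hiter k).1
    have hpk : p (x k) = -deriv p (x k) * (x (k + 1) - x k) := by
      rw [hrec k]
      field_simp [(hstep k).1.ne]
      ring
    rw [hpk]
    exact mul_le_mul_of_nonneg_right (by linarith) (sub_nonneg.mpr (hstep k).2.1)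
  have hpL : p L ≤ 0 := by
    have hbound : Tendsto (fun k => -deriv p (x 0) * (x (k + 1) - x k)) atTop (𝓝 0) := by
      simpa using ((hlim.comp (tendsto_add_atTop_nat 1)).sub hlim).const_mul (-deriv p (x 0))
    exact le_of_tendsto_of_tendsto' ((hd L (hsub hL)).continuousAt.tendsto.comp hlim) hbound
      hresidual
  obtain rfl : L = r := hL.2.eq_of_not_lt fun hLr =>
    (hp.apply_lt_apply_of_deriv_neg (hsub hL) hr hLr (hd r hr) hdr).not_ge (hpr ▸ hpL)
  exact hlim

end ConvexOn

theorem newton_converges_to_unique_root_general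
    (I : Set ℝ) (hI : I.OrdConnected) (p : ℝ → ℝ)
    (hdiff : ∀ x ∈ I, DifferentiableAt ℝ p x)
    (hconv : ConvexOn ℝ I p) (hmono : AntitoneOn p I)
    (xt xb : ℝ) (hxt : xt ∈ I) (hxb : xb ∈ I)
    (hpxt : 0 < p xt) (hpxb : p xb < 0) :
    ∃ r ∈ I, p r = 0 ∧ (∀ r' ∈ I, p r' = 0 → r' = r) ∧
      ∀ x : ℕ → ℝ, x 0 = xt →
        (∀ k, x (k + 1) = x k - p (x k) / deriv p (x k)) →
        (∀ k, x k ∈ I ∧ deriv p (x k) < 0) ∧ Tendsto x atTop (nhds r) := by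
  have hcont : ContinuousOn p I := fun x hx => (hdiff x hx).continuousAt.continuousWithinAt
  obtain ⟨r, hrI, hpr⟩ : ∃ r ∈ I, p r = 0 :=
    hI.isPreconnected.intermediate_value hxb hxt hcont ⟨hpxb.le, hpxt.le⟩
  have hroot : ∀ z ∈ I, p z = 0 → deriv p z < 0 := fun z hz hpz => by
    have hlt : p xb < p z := by rwa [hpz]
    exact hconv.deriv_neg_of_apply_lt hz hxb (hmono.reflect_lt hxb hz hlt) hlt (hdiff z hz)
  refine ⟨r, hrI, hpr, fun r' hr' hpr' => ?_, fun x hx0 hrec => ?_⟩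
  · exact hconv.injOn_of_deriv_neg hdiff ⟨hr', hroot r' hr' hpr'⟩ ⟨hrI, hroot r hrI hpr⟩
      (hpr'.trans hpr.symm)
  · have hxtr : xt ≤ r := (hmono.reflect_lt hrI hxt (by rwa [hpr])).le
    subst hx0
    exact hconv.tendsto_newton hI hdiff hrI hpr (hroot r hrI hpr) hxt hxtr hrec

/-- Proposition 2: a convex, twice differentiable, non-increasing function with a sign
change on an interval has a unique root there, and Newton's method started at a point
with positive value is well defined and converges to that root. -/
theorem newton_converges_to_unique_root
    (I : Set ℝ) (hI : I.OrdConnected) (p : ℝ → ℝ)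
    (hdiff : ∀ x ∈ I, DifferentiableAt ℝ p x)
    (hdiff2 : ∀ x ∈ I, DifferentiableAt ℝ (deriv p) x)
    (hconv : ConvexOn ℝ I p) (hmono : AntitoneOn p I)
    (xt xb : ℝ) (hxt : xt ∈ I) (hxb : xb ∈ I)
    (hpxt : 0 < p xt) (hpxb : p xb < 0) :
    ∃ r ∈ I, p r = 0 ∧ (∀ r' ∈ I, p r' = 0 → r' = r) ∧
      ∀ x : ℕ → ℝ, x 0 = xt →
        (∀ k, x (k + 1) = x k - p (x k) / deriv p (x k)) →
        (∀ k, x k ∈ I ∧ deriv p (x k) < 0) ∧ Tendsto x atTop (nhds r) :=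
  newton_converges_to_unique_root_general I hI p hdiff hconv hmono xt xb hxt hxb hpxt hpxb
end

section
/- Let n, m ≥ 1, let C ∈ ℝ^{n×m} have all entries C_{ij} ≥ 0, let τ_1, τ_2 ≥ 0 and t > 0, let α ∈ Δ^n and β ∈ Δ^m have all entries strictly positive, and let π̄ ∈ ℝ^{n×m} satisfy 0 < π̄_{ij} ≤ 1 for all i,j. Define, for π ∈ ℝ^{n×m} with π_{ij} ≥ 0, φ(π) = ∑_{ij} C_{ij} π_{ij} + τ_1·KL(π·1_m, α) + τ_2·KL(πᵀ·1_n, β) + (1/t)·KL(π, π̄), where π·1_m ∈ ℝ^n and πᵀ·1_n ∈ ℝ^m are the row-sum and column-sum vectors of π and KL(π, π̄) treats π, π̄ as vectors in ℝ^{nm}. If π* minimizes φ over {π ∈ ℝ^{n×m} : π_{ij} ≥ 0 for all i,j}, then π*_{ij} ≤ 1 for all i,j. -/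
/-!
Truncating a nonnegative plan entrywise at `1` cannot increase `φ`, and strictly decreases it as
soon as some entry exceeds `1`. Each generalized-KL summand `x ↦ x log (x / p) - x + p`
equals `p · klFun (x / p)` and is therefore strictly increasing on `[p, ∞)`. With `p = π̄ᵢⱼ ≤ 1`
this handles the entrywise term. A row (or column) sum either does not change under truncation,
or it drops but stays at least `1 ≥ αᵢ` (resp. `βⱼ`), because the row then contains an entry
equal to `1`. Finally the linear term decreases since `C ≥ 0`.
-/

open Finset InformationTheory

noncomputable def klSummand (p x : ℝ) : ℝ := x * Real.log (x / p) - x + p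

lemma strictMonoOn_klFun : StrictMonoOn klFun (Set.Ici 1) :=
  strictMonoOn_of_deriv_pos (convex_Ici 1) continuous_klFun.continuousOn fun x hx => by
    rw [interior_Ici] at hx
    rw [deriv_klFun]; exact Real.log_pos hx

lemma klSummand_eq_mul_klFun {p : ℝ} (hp : 0 < p) (x : ℝ) :
    klSummand p x = p * klFun (x / p) := by
  rw [klSummand, klFun_apply]
  field_simp
  ring

lemma strictMonoOn_klSummand {p : ℝ} (hp : 0 < p) : StrictMonoOn (klSummand p) (Set.Ici p) := by
  intro x hx y hy hxy
  have hdiv {z : ℝ} (hz : z ∈ Set.Ici p) : z / p ∈ Set.Ici 1 := (one_le_div hp).2 hz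
  rw [klSummand_eq_mul_klFun hp, klSummand_eq_mul_klFun hp]
  exact mul_lt_mul_of_pos_left
    (strictMonoOn_klFun (hdiv hx) (hdiv hy) (div_lt_div_of_pos_right hxy hp)) hp

lemma klSummand_min_one_lt {p x : ℝ} (hp : 0 < p) (hp1 : p ≤ 1) (hx : 1 < x) :
    klSummand p (min x 1) < klSummand p x := by
  rw [min_eq_right hx.le]
  exact strictMonoOn_klSummand hp hp1 (hp1.trans hx.le) hx

lemma klSummand_min_one_le {p : ℝ} (hp : 0 < p) (hp1 : p ≤ 1) (x : ℝ) :
    klSummand p (min x 1) ≤ klSummand p x := by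
  rcases le_or_gt x 1 with hx | hx
  · rw [min_eq_left hx]
  · exact (klSummand_min_one_lt hp hp1 hx).le

lemma klSummand_sum_min_one_le {ι : Type*} [Fintype ι] {p : ℝ} (hp : 0 < p) (hp1 : p ≤ 1)
    {v : ι → ℝ} (hv : ∀ k, 0 ≤ v k) :
    klSummand p (∑ k, min (v k) 1) ≤ klSummand p (∑ k, v k) := by
  by_cases hle : ∀ k, v k ≤ 1
  · rw [sum_congr rfl fun k _ => min_eq_left (hle k)]
  obtain ⟨k, hk⟩ : ∃ k, 1 < v k := by simpa using hle
  have hmin_nonneg : ∀ l, 0 ≤ min (v l) 1 := fun l => le_min (hv l) zero_le_one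
  have hp_le : p ≤ ∑ l, min (v l) 1 :=
    calc p ≤ min (v k) 1 := by rwa [min_eq_right hk.le]
      _ ≤ ∑ l, min (v l) 1 := single_le_sum (fun l _ => hmin_nonneg l) (mem_univ k)
  have hsum_le : ∑ l, min (v l) 1 ≤ ∑ l, v l := sum_le_sum fun l _ => min_le_left _ _
  exact (strictMonoOn_klSummand hp).monotoneOn hp_le (hp_le.trans hsum_le) hsum_le

section Objective

variable {ι κ : Type*} [Fintype ι] [Fintype κ]
  (C : ι → κ → ℝ) (τ₁ τ₂ t : ℝ) (α : ι → ℝ) (β : κ → ℝ) (πb : ι → κ → ℝ)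

noncomputable def piObjective (π : ι → κ → ℝ) : ℝ :=
  (∑ i, ∑ j, C i j * π i j)
    + τ₁ * ∑ i, klSummand (α i) (∑ j, π i j)
    + τ₂ * ∑ j, klSummand (β j) (∑ i, π i j)
    + (1 / t) * ∑ i, ∑ j, klSummand (πb i j) (π i j)

variable {C τ₁ τ₂ t α β πb}

lemma piObjective_min_one_lt (hC : ∀ i j, 0 ≤ C i j) (hτ₁ : 0 ≤ τ₁) (hτ₂ : 0 ≤ τ₂) (ht : 0 < t)
    (hα : ∀ i, 0 < α i) (hα1 : ∀ i, α i ≤ 1) (hβ : ∀ j, 0 < β j) (hβ1 : ∀ j, β j ≤ 1)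
    (hπb : ∀ i j, 0 < πb i j ∧ πb i j ≤ 1) {π : ι → κ → ℝ} (hπ : ∀ i j, 0 ≤ π i j)
    {i₀ : ι} {j₀ : κ} (h : 1 < π i₀ j₀) :
    piObjective C τ₁ τ₂ t α β πb (fun i j => min (π i j) 1) < piObjective C τ₁ τ₂ t α β πb π := by
  have hcost : ∑ i, ∑ j, C i j * min (π i j) 1 ≤ ∑ i, ∑ j, C i j * π i j :=
    sum_le_sum fun i _ => sum_le_sum fun j _ =>
      mul_le_mul_of_nonneg_left (min_le_left _ _) (hC i j)
  have hrows : ∑ i, klSummand (α i) (∑ j, min (π i j) 1) ≤ ∑ i, klSummand (α i) (∑ j, π i j) :=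
    sum_le_sum fun i _ => klSummand_sum_min_one_le (hα i) (hα1 i) (hπ i)
  have hcols : ∑ j, klSummand (β j) (∑ i, min (π i j) 1) ≤ ∑ j, klSummand (β j) (∑ i, π i j) :=
    sum_le_sum fun j _ => klSummand_sum_min_one_le (hβ j) (hβ1 j) (hπ · j)
  have hentries : ∑ i, ∑ j, klSummand (πb i j) (min (π i j) 1)
      < ∑ i, ∑ j, klSummand (πb i j) (π i j) := by
    have hle (i : ι) (j : κ) := klSummand_min_one_le (hπb i j).1 (hπb i j).2 (π i j)
    refine sum_lt_sum (fun i _ => sum_le_sum fun j _ => hle i j) ⟨i₀, mem_univ _, ?_⟩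
    exact sum_lt_sum (fun j _ => hle i₀ j)
      ⟨j₀, mem_univ _, klSummand_min_one_lt (hπb i₀ j₀).1 (hπb i₀ j₀).2 h⟩
  unfold piObjective
  have := mul_le_mul_of_nonneg_left hrows hτ₁
  have := mul_le_mul_of_nonneg_left hcols hτ₂
  have := mul_lt_mul_of_pos_left hentries (one_div_pos.2 ht)
  linarith

end Objective

lemma le_one_of_sum_eq_one {ι : Type*} [Fintype ι] {w : ι → ℝ} (hw : ∀ i, 0 ≤ w i)
    (hsum : ∑ i, w i = 1) (i : ι) : w i ≤ 1 :=
  hsum ▸ single_le_sum (fun k _ => hw k) (mem_univ i)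

theorem pi_subproblem_minimizer_le_one_general
    (n m : ℕ)
    (C : Fin n → Fin m → ℝ) (hC : ∀ i j, 0 ≤ C i j)
    (τ₁ τ₂ t : ℝ) (hτ₁ : 0 ≤ τ₁) (hτ₂ : 0 ≤ τ₂) (ht : 0 < t)
    (α : Fin n → ℝ) (hα : ∀ i, 0 < α i) (hαsum : ∑ i, α i = 1)
    (β : Fin m → ℝ) (hβ : ∀ j, 0 < β j) (hβsum : ∑ j, β j = 1)
    (πb : Fin n → Fin m → ℝ) (hπb : ∀ i j, 0 < πb i j ∧ πb i j ≤ 1)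
    (φ : (Fin n → Fin m → ℝ) → ℝ)
    (hφ : φ = fun π =>
      (∑ i, ∑ j, C i j * π i j)
      + τ₁ * ∑ i, ((∑ j, π i j) * Real.log ((∑ j, π i j) / α i) - (∑ j, π i j) + α i)
      + τ₂ * ∑ j, ((∑ i, π i j) * Real.log ((∑ i, π i j) / β j) - (∑ i, π i j) + β j)
      + (1 / t) * ∑ i, ∑ j, (π i j * Real.log (π i j / πb i j) - π i j + πb i j))
    (πs : Fin n → Fin m → ℝ) (hπs : ∀ i j, 0 ≤ πs i j)
    (hmin : ∀ π : Fin n → Fin m → ℝ, (∀ i j, 0 ≤ π i j) → φ πs ≤ φ π) :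
    ∀ i j, πs i j ≤ 1 := by
  intro i j
  by_contra! hgt
  have hlt := piObjective_min_one_lt hC hτ₁ hτ₂ ht
    hα (le_one_of_sum_eq_one (hα · |>.le) hαsum) hβ (le_one_of_sum_eq_one (hβ · |>.le) hβsum)
    hπb hπs hgt
  subst hφ
  exact (hmin _ fun i j => le_min (hπs i j) zero_le_one).not_gt hlt

/-- Boundedness of the minimizer of the `π`-subproblem: any minimizer of the linearized
penalized objective `φ` over the nonnegative orthant has all entries at most `1`. -/
theorem pi_subproblem_minimizer_le_one
    (n m : ℕ) (hn : 1 ≤ n) (hm : 1 ≤ m)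
    (C : Fin n → Fin m → ℝ) (hC : ∀ i j, 0 ≤ C i j)
    (τ₁ τ₂ t : ℝ) (hτ₁ : 0 ≤ τ₁) (hτ₂ : 0 ≤ τ₂) (ht : 0 < t)
    (α : Fin n → ℝ) (hα : ∀ i, 0 < α i) (hαsum : ∑ i, α i = 1)
    (β : Fin m → ℝ) (hβ : ∀ j, 0 < β j) (hβsum : ∑ j, β j = 1)
    (πb : Fin n → Fin m → ℝ) (hπb : ∀ i j, 0 < πb i j ∧ πb i j ≤ 1)
    (φ : (Fin n → Fin m → ℝ) → ℝ)
    (hφ : φ = fun π =>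
      (∑ i, ∑ j, C i j * π i j)
      + τ₁ * ∑ i, ((∑ j, π i j) * Real.log ((∑ j, π i j) / α i) - (∑ j, π i j) + α i)
      + τ₂ * ∑ j, ((∑ i, π i j) * Real.log ((∑ i, π i j) / β j) - (∑ i, π i j) + β j)
      + (1 / t) * ∑ i, ∑ j, (π i j * Real.log (π i j / πb i j) - π i j + πb i j))
    (πs : Fin n → Fin m → ℝ) (hπs : ∀ i j, 0 ≤ πs i j)
    (hmin : ∀ π : Fin n → Fin m → ℝ, (∀ i j, 0 ≤ π i j) → φ πs ≤ φ π) :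
    ∀ i j, πs i j ≤ 1 :=
  pi_subproblem_minimizer_le_one_general n m C hC τ₁ τ₂ t hτ₁ hτ₂ ht α hα hαsum β hβ hβsum πb hπb φ
    hφ πs hπs hmin
end

section
/- Let n, m ≥ 1, τ_1, τ_2 ≥ 0, σ > 0, and t, c, r > 0. Let f : ℝ^{n×m} → ℝ be differentiable with gradient ∇f that is L_f-Lipschitz with respect to the Frobenius norm. Fix μ ∈ Δ^n, ν ∈ Δ^m and ρ_1, ρ_2 ≥ 0, and let S_α = {α ∈ Δ^n : all α_i > 0 and ∑_i μ_i log(μ_i/α_i) ≤ ρ_1} and S_β = {β ∈ Δ^m : all β_j > 0 and ∑_j ν_j log(ν_j/β_j) ≤ ρ_2}. Define F(π,α,β) = f(π) + τ_1·KL(π·1_m, α) + τ_2·KL(πᵀ·1_n, β). Let π^k ∈ ℝ^{n×m} with all entries strictly positive, α^k ∈ S_α, β^k ∈ S_β, and suppose: π^{k+1} minimizes π ↦ ⟨∇f(π^k), π⟩ + τ_1·KL(π·1_m, α^k) + τ_2·KL(πᵀ·1_n, β^k) + (1/t)·KL(π, π^k) over {π : π_{ij} ≥ 0}; α^{k+1}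 minimizes α ↦ τ_1·KL(π^{k+1}·1_m, α) + (1/c)·KL(α^k, α) over S_α; and β^{k+1} minimizes β ↦ τ_2·KL((π^{k+1})ᵀ·1_n, β) + (1/r)·KL(β^k, β) over S_β. Assume in addition that KL(π^{k+1}, π^k) ≥ (σ/2)·‖π^{k+1} − π^k‖_F², KL(α^k, α^{k+1}) ≥ (σ/2)·‖α^k − α^{k+1}‖₂², and KL(β^k, β^{k+1}) ≥ (σ/2)·‖β^k − β^{k+1}‖₂². Then F(π^{k+1}, α^{k+1}, β^{k+1}) − F(π^k, α^k, β^k) ≤ −(1/t − L_f/σ)·KL(π^{k+1}, π^k) − (1/c)·KL(α^k, α^{k+1}) − (1/r)·KL(β^k, β^{k+1}), and consequently F(π^{k+1}, α^{k+1}, β^{k+1}) − F(π^k, α^k, β^k) ≤ −(σ/2)·[ (1/t − L_f/σ)·‖π^{k+1} − π^k‖_F² + (1/c)·‖α^{k+1} − α^k‖₂² + (1/r)·‖β^{k+1} − β^k‖₂² ]. -/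
open Finset

/-- Generalized Kullback–Leibler divergence between nonnegative vectors (with the
convention `0 · log 0 = 0`, which holds for `Real.log` since `Real.log 0 = 0`). -/
noncomputable def klVec {ι : Type*} [Fintype ι] (a b : ι → ℝ) : ℝ :=
  ∑ i, (a i * Real.log (a i / b i) - a i + b i)

open scoped InnerProductSpace

/-! Testing the minimality of each block update against the previous iterate (feasible, and at
Bregman distance zero from itself) shows that the update lowers its part of `F` by at least the
corresponding Bregman distance, except that the `π`-step only sees the linearization of `f`; the
descent lemma for the `L_f`-smooth `f` bounds that error by `L_f / 2 · ‖π^{k+1} - π^k‖²`. The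
bounds `KL ≥ σ / 2 · ‖·‖²` then turn this error into `L_f / σ · KL` for the first estimate, and
the Bregman distances into squared distances for the second. -/

theorem Differentiable.image_le_add_inner_gradient_add_sq {E : Type*} [NormedAddCommGroup E]
    [InnerProductSpace ℝ E] [CompleteSpace E] {f : E → ℝ} {L : ℝ} (hf : Differentiable ℝ f)
    (hLip : ∀ x y, ‖gradient f x - gradient f y‖ ≤ L * ‖x - y‖) (x y : E) :
    f y ≤ f x + ⟪gradient f x, y - x⟫_ℝ + L / 2 * ‖y - x‖ ^ 2 := by
  set d := y - x
  -- `φ` is antitone on `[0, ∞)`: its derivative is `⟪∇f(x + s d) - ∇f x, d⟫ - L s ‖d‖² ≤ 0`.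
  set φ : ℝ → ℝ := fun s => f (x + s • d) - s * ⟪gradient f x, d⟫_ℝ - L / 2 * s ^ 2 * ‖d‖ ^ 2
  have hφ : ∀ s, HasDerivAt φ
      (⟪gradient f (x + s • d), d⟫_ℝ - ⟪gradient f x, d⟫_ℝ - L * s * ‖d‖ ^ 2) s := by
    intro s
    have hline : HasDerivAt (fun s : ℝ => x + s • d) d s := by
      simpa using ((hasDerivAt_id s).smul_const d).const_add x
    refine ((((hf _).hasGradientAt.hasFDerivAt.comp_hasDerivAt s hline).sub
      ((hasDerivAt_id s).mul_const ⟪gradient f x, d⟫_ℝ)).sub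
      (((hasDerivAt_pow 2 s).const_mul (L / 2)).mul_const (‖d‖ ^ 2))).congr_deriv ?_
    simp only [InnerProductSpace.toDual_apply_apply]
    ring
  have hφ_nonpos : ∀ s ∈ interior (Set.Ici (0 : ℝ)),
      ⟪gradient f (x + s • d), d⟫_ℝ - ⟪gradient f x, d⟫_ℝ - L * s * ‖d‖ ^ 2 ≤ 0 := by
    intro s hs
    have hs : (0 : ℝ) ≤ s := interior_subset hs
    rw [sub_nonpos]
    calc ⟪gradient f (x + s • d), d⟫_ℝ - ⟪gradient f x, d⟫_ℝ
        = ⟪gradient f (x + s • d) - gradient f x, d⟫_ℝ := (inner_sub_left _ _ _).symm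
      _ ≤ ‖gradient f (x + s • d) - gradient f x‖ * ‖d‖ := real_inner_le_norm _ _
      _ ≤ L * ‖s • d‖ * ‖d‖ := by
          gcongr
          simpa using hLip (x + s • d) x
      _ = L * s * ‖d‖ ^ 2 := by rw [norm_smul, Real.norm_of_nonneg hs]; ring
  have hmono : φ 1 ≤ φ 0 := antitoneOn_of_hasDerivWithinAt_nonpos (convex_Ici 0)
    (fun s _ => (hφ s).continuousAt.continuousWithinAt) (fun s _ => (hφ s).hasDerivWithinAt)
    hφ_nonpos Set.self_mem_Ici (Set.mem_Ici.mpr zero_le_one) zero_le_one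
  simp only [φ, d, one_smul, zero_smul, add_zero, add_sub_cancel] at hmono
  linarith

theorem nonneg_of_forall_norm_sub_le_mul {E F : Type*} [NormedAddCommGroup E] [Nontrivial E]
    [SeminormedAddCommGroup F] {g : E → F} {L : ℝ} (h : ∀ x y, ‖g x - g y‖ ≤ L * ‖x - y‖) :
    0 ≤ L := by
  obtain ⟨x, y, hxy⟩ := exists_pair_ne E
  exact nonneg_of_mul_nonneg_left ((norm_nonneg _).trans (h x y))
    (norm_pos_iff.mpr (sub_ne_zero.mpr hxy))

theorem EuclideanSpace.real_inner_eq_sum {ι : Type*} [Fintype ι] (x y : EuclideanSpace ℝ ι) :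
    ⟪x, y⟫_ℝ = ∑ i, x i * y i := by
  simp [PiLp.inner_apply, mul_comm]

theorem klVec_self {ι : Type*} [Fintype ι] (a : ι → ℝ) : klVec a a = 0 := by
  refine sum_eq_zero fun i _ => ?_
  rcases eq_or_ne (a i) 0 with h | h
  · simp [h]
  · rw [div_self h, Real.log_one]
    ring

theorem bpalm_sufficient_decrease_general
    (n m : ℕ) (hn : 1 ≤ n) (hm : 1 ≤ m)
    (τ₁ τ₂ : ℝ)
    (σ t c r : ℝ) (hσ : 0 < σ) (ht : 0 < t) (hc : 0 < c) (hr : 0 < r)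
    (f : EuclideanSpace ℝ (Fin n × Fin m) → ℝ) (Lf : ℝ)
    (hf : Differentiable ℝ f)
    (hLip : ∀ x y : EuclideanSpace ℝ (Fin n × Fin m),
      ‖gradient f x - gradient f y‖ ≤ Lf * ‖x - y‖)
    (Sα : Set (Fin n → ℝ))
    (Sβ : Set (Fin m → ℝ))
    (F : EuclideanSpace ℝ (Fin n × Fin m) → (Fin n → ℝ) → (Fin m → ℝ) → ℝ)
    (hF : F = fun π α β => f π
      + τ₁ * klVec (fun i => ∑ j, π (i, j)) α
      + τ₂ * klVec (fun j => ∑ i, π (i, j)) β)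
    (πold πnew : EuclideanSpace ℝ (Fin n × Fin m))
    (αold αnew : Fin n → ℝ) (βold βnew : Fin m → ℝ)
    (hπold : ∀ q, 0 < πold q) (hαold : αold ∈ Sα) (hβold : βold ∈ Sβ)
    -- π-update: πnew minimizes the linearized objective over the nonnegative orthant
    (hπnew_min : ∀ π : EuclideanSpace ℝ (Fin n × Fin m), (∀ q, 0 ≤ π q) →
      (∑ q, gradient f πold q * πnew q)
        + τ₁ * klVec (fun i => ∑ j, πnew (i, j)) αold
        + τ₂ * klVec (fun j => ∑ i, πnew (i, j)) βold
        + (1 / t) * klVec (fun q => πnew q) (fun q => πold q)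
      ≤ (∑ q, gradient f πold q * π q)
        + τ₁ * klVec (fun i => ∑ j, π (i, j)) αold
        + τ₂ * klVec (fun j => ∑ i, π (i, j)) βold
        + (1 / t) * klVec (fun q => π q) (fun q => πold q))
    -- α-update: αnew minimizes over Sα
    (hαnew_min : ∀ α ∈ Sα,
      τ₁ * klVec (fun i => ∑ j, πnew (i, j)) αnew + (1 / c) * klVec αold αnew
      ≤ τ₁ * klVec (fun i => ∑ j, πnew (i, j)) α + (1 / c) * klVec αold α)
    -- β-update: βnew minimizes over Sβ
    (hβnew_min : ∀ β ∈ Sβ,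
      τ₂ * klVec (fun j => ∑ i, πnew (i, j)) βnew + (1 / r) * klVec βold βnew
      ≤ τ₂ * klVec (fun j => ∑ i, πnew (i, j)) β + (1 / r) * klVec βold β)
    -- strong-convexity lower bounds for the Bregman distances
    (hπsc : (σ / 2) * ∑ q, (πnew q - πold q) ^ 2 ≤
      klVec (fun q => πnew q) (fun q => πold q))
    (hαsc : (σ / 2) * ∑ i, (αold i - αnew i) ^ 2 ≤ klVec αold αnew)
    (hβsc : (σ / 2) * ∑ j, (βold j - βnew j) ^ 2 ≤ klVec βold βnew) :
    F πnew αnew βnew - F πold αold βold ≤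
      -(1 / t - Lf / σ) * klVec (fun q => πnew q) (fun q => πold q)
        - (1 / c) * klVec αold αnew - (1 / r) * klVec βold βnew ∧
    F πnew αnew βnew - F πold αold βold ≤
      -(σ / 2) * ((1 / t - Lf / σ) * (∑ q, (πnew q - πold q) ^ 2)
        + (1 / c) * (∑ i, (αnew i - αold i) ^ 2)
        + (1 / r) * (∑ j, (βnew j - βold j) ^ 2)) := by
  set Kπ := klVec (fun q => πnew q) (fun q => πold q)
  set Sπ := ∑ q, (πnew q - πold q) ^ 2
  have hLf : 0 ≤ Lf := by
    have : Nonempty (Fin n × Fin m) := ⟨(⟨0, hn⟩, ⟨0, hm⟩)⟩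
    exact nonneg_of_forall_norm_sub_le_mul hLip
  have hdesc := hf.image_le_add_inner_gradient_add_sq hLip πold πnew
  simp only [EuclideanSpace.real_inner_eq_sum, EuclideanSpace.real_norm_sq_eq, PiLp.sub_apply,
    mul_sub, sum_sub_distrib] at hdesc
  have hπ := hπnew_min πold fun q => (hπold q).le
  have hα := hαnew_min αold hαold
  have hβ := hβnew_min βold hβold
  rw [klVec_self] at hπ hα hβ
  have key : F πnew αnew βnew - F πold αold βold ≤
      Lf / 2 * Sπ - 1 / t * Kπ - 1 / c * klVec αold αnew - 1 / r * klVec βold βnew := by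
    subst hF
    linarith
  have hquad : Lf / 2 * Sπ ≤ Lf / σ * Kπ :=
    calc Lf / 2 * Sπ = Lf / σ * (σ / 2 * Sπ) := by field_simp
      _ ≤ Lf / σ * Kπ := mul_le_mul_of_nonneg_left hπsc (div_nonneg hLf hσ.le)
  simp only [sub_sq_comm (αnew _), sub_sq_comm (βnew _)]
  refine ⟨by linarith, ?_⟩
  calc F πnew αnew βnew - F πold αold βold
      ≤ Lf / 2 * Sπ - 1 / t * (σ / 2 * Sπ) - 1 / c * (σ / 2 * ∑ i, (αold i - αnew i) ^ 2)
        - 1 / r * (σ / 2 * ∑ j, (βold j - βnew j) ^ 2) := by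
        refine key.trans ?_
        gcongr
    _ = _ := by field_simp; ring

/-- Sufficient decrease of one BPALM iteration for the discrete robust
Gromov–Wasserstein problem. -/
theorem bpalm_sufficient_decrease
    (n m : ℕ) (hn : 1 ≤ n) (hm : 1 ≤ m)
    (τ₁ τ₂ : ℝ) (hτ₁ : 0 ≤ τ₁) (hτ₂ : 0 ≤ τ₂)
    (σ t c r : ℝ) (hσ : 0 < σ) (ht : 0 < t) (hc : 0 < c) (hr : 0 < r)
    (f : EuclideanSpace ℝ (Fin n × Fin m) → ℝ) (Lf : ℝ)
    (hf : Differentiable ℝ f)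
    (hLip : ∀ x y : EuclideanSpace ℝ (Fin n × Fin m),
      ‖gradient f x - gradient f y‖ ≤ Lf * ‖x - y‖)
    (μ : Fin n → ℝ) (hμ : ∀ i, 0 < μ i) (hμsum : ∑ i, μ i = 1)
    (ν : Fin m → ℝ) (hν : ∀ j, 0 < ν j) (hνsum : ∑ j, ν j = 1)
    (ρ₁ ρ₂ : ℝ) (hρ₁ : 0 ≤ ρ₁) (hρ₂ : 0 ≤ ρ₂)
    (Sα : Set (Fin n → ℝ))
    (hSα : Sα = {α | (∀ i, 0 < α i) ∧ (∑ i, α i = 1) ∧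
      (∑ i, μ i * Real.log (μ i / α i)) ≤ ρ₁})
    (Sβ : Set (Fin m → ℝ))
    (hSβ : Sβ = {β | (∀ j, 0 < β j) ∧ (∑ j, β j = 1) ∧
      (∑ j, ν j * Real.log (ν j / β j)) ≤ ρ₂})
    (F : EuclideanSpace ℝ (Fin n × Fin m) → (Fin n → ℝ) → (Fin m → ℝ) → ℝ)
    (hF : F = fun π α β => f π
      + τ₁ * klVec (fun i => ∑ j, π (i, j)) α
      + τ₂ * klVec (fun j => ∑ i, π (i, j)) β)
    (πold πnew : EuclideanSpace ℝ (Fin n × Fin m))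
    (αold αnew : Fin n → ℝ) (βold βnew : Fin m → ℝ)
    (hπold : ∀ q, 0 < πold q) (hαold : αold ∈ Sα) (hβold : βold ∈ Sβ)
    -- π-update: πnew minimizes the linearized objective over the nonnegative orthant
    (hπnew_nonneg : ∀ q, 0 ≤ πnew q)
    (hπnew_min : ∀ π : EuclideanSpace ℝ (Fin n × Fin m), (∀ q, 0 ≤ π q) →
      (∑ q, gradient f πold q * πnew q)
        + τ₁ * klVec (fun i => ∑ j, πnew (i, j)) αold
        + τ₂ * klVec (fun j => ∑ i, πnew (i, j)) βold
        + (1 / t) * klVec (fun q => πnew q) (fun q => πold q)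
      ≤ (∑ q, gradient f πold q * π q)
        + τ₁ * klVec (fun i => ∑ j, π (i, j)) αold
        + τ₂ * klVec (fun j => ∑ i, π (i, j)) βold
        + (1 / t) * klVec (fun q => π q) (fun q => πold q))
    -- α-update: αnew minimizes over Sα
    (hαnew_mem : αnew ∈ Sα)
    (hαnew_min : ∀ α ∈ Sα,
      τ₁ * klVec (fun i => ∑ j, πnew (i, j)) αnew + (1 / c) * klVec αold αnew
      ≤ τ₁ * klVec (fun i => ∑ j, πnew (i, j)) α + (1 / c) * klVec αold α)
    -- β-update: βnew minimizes over Sβ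
    (hβnew_mem : βnew ∈ Sβ)
    (hβnew_min : ∀ β ∈ Sβ,
      τ₂ * klVec (fun j => ∑ i, πnew (i, j)) βnew + (1 / r) * klVec βold βnew
      ≤ τ₂ * klVec (fun j => ∑ i, πnew (i, j)) β + (1 / r) * klVec βold β)
    -- strong-convexity lower bounds for the Bregman distances
    (hπsc : (σ / 2) * ∑ q, (πnew q - πold q) ^ 2 ≤
      klVec (fun q => πnew q) (fun q => πold q))
    (hαsc : (σ / 2) * ∑ i, (αold i - αnew i) ^ 2 ≤ klVec αold αnew)
    (hβsc : (σ / 2) * ∑ j, (βold j - βnew j) ^ 2 ≤ klVec βold βnew) :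
    F πnew αnew βnew - F πold αold βold ≤
      -(1 / t - Lf / σ) * klVec (fun q => πnew q) (fun q => πold q)
        - (1 / c) * klVec αold αnew - (1 / r) * klVec βold βnew ∧
    F πnew αnew βnew - F πold αold βold ≤
      -(σ / 2) * ((1 / t - Lf / σ) * (∑ q, (πnew q - πold q) ^ 2)
        + (1 / c) * (∑ i, (αnew i - αold i) ^ 2)
        + (1 / r) * (∑ j, (βnew j - βold j) ^ 2)) :=
  bpalm_sufficient_decrease_general n m hn hm τ₁ τ₂ σ t c r hσ ht hc hr f Lf hf hLip Sα Sβ F hF πold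
    πnew αold αnew βold βnew hπold hαold hβold hπnew_min hαnew_min hβnew_min hπsc hαsc hβsc
end
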